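/- arXiv:1206.1916 — 6 statements merged into one kernel-verified Lean document; each statement's English description precedes it below -/
import Mathlib

section
/- Let x_1,...,x_n ∈ ℝ^d with C_i = cone(x_1,...,x_i). If dim C_i > dim C_{i-1}, then the lexicographic triangulation is invariant under swapping x_{i-1} and x_i: Λ(x_1,...,x_n) = Λ(x_1,...,x_{i-2}, x_i, x_{i-1}, x_{i+1},...,x_n). -/
open Finset

/-- Ambient space `ℝ^d`. -/
abbrev E (d : ℕ) := Fin d → ℝ

/-- The cone generated by a set of vectors:
all finite nonnegative combinations. -/
def coneOf {d : ℕ} (s : Set (E d)) : Set (E d) :=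
  {y | ∃ (t : Finset (E d)) (c : E d → ℝ),
        ↑t ⊆ s ∧ (∀ v, 0 ≤ c v) ∧ y = ∑ v ∈ t, c v • v}

/-- The cone generated by a finite family `x_1, …, x_n`:
`ℝ₊x_1 + ⋯ + ℝ₊x_n`. -/
def coneFin {d n : ℕ} (x : Fin n → E d) : Set (E d) :=
  {y | ∃ c : Fin n → ℝ, (∀ i, 0 ≤ c i) ∧ y = ∑ i, c i • x i}

/-- `σ` is visible from `x` (relative to the cone `D`) if `x ∉ D` and for every
`y ∈ σ` the segment `[x,y]` meets `D` only in `y`. -/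
def VisibleFrom {d : ℕ} (D : Set (E d)) (x : E d) (σ : Set (E d)) : Prop :=
  x ∉ D ∧ ∀ y ∈ σ, ∀ z ∈ segment ℝ x y, z ∈ D → z = y

/-- `cone(σ, x)` for a cone `σ`: all points `y + t•x`, `y ∈ σ`, `t ≥ 0`. -/
def addRay {d : ℕ} (σ : Set (E d)) (x : E d) : Set (E d) :=
  {z | ∃ y ∈ σ, ∃ t : ℝ, 0 ≤ t ∧ z = y + t • x}

/-- The lexicographic (placing) triangulation `Λ(x_1,…,x_n)`, defined
recursively: trivial for the zero cone, and at each step the cones over the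
members of the previous triangulation visible from the new generator are
added. -/
def lexTri {d : ℕ} : (n : ℕ) → (Fin n → E d) → Set (Set (E d))
  | 0, _ => {{0}}
  | n + 1, x =>
      lexTri n (fun i => x i.castSucc) ∪
      {τ | ∃ σ ∈ lexTri n (fun i => x i.castSucc),
            VisibleFrom (coneFin (fun i => x i.castSucc)) (x (Fin.last n)) σ ∧
            τ = addRay σ (x (Fin.last n))}

/-- The dimension of a subset of `ℝ^d`: the dimension of its linear span. -/
noncomputable def setDim {d : ℕ} (s : Set (E d)) : ℕ :=
  Module.finrank ℝ (Submodule.span ℝ s)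

/-- Restriction `Σ|C' = {σ ∩ C' : σ ∈ Σ, dim (σ ∩ C') = dim C'}`. -/
noncomputable def restrictTri {d : ℕ} (T : Set (Set (E d))) (s : Set (E d)) :
    Set (Set (E d)) :=
  {τ | ∃ σ ∈ T, τ = σ ∩ s ∧ setDim (σ ∩ s) = setDim s}

/-- `F` is a face of the cone `C`: either `C` itself or the intersection of
`C` with a supporting hyperplane. -/
def IsFace {d : ℕ} (C F : Set (E d)) : Prop :=
  F = C ∨ ∃ μ : (E d) →ₗ[ℝ] ℝ, (∀ y ∈ C, 0 ≤ μ y) ∧ F = C ∩ {y | μ y = 0}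

/-- A cone is pointed if it contains no nonzero linear subspace. -/
def IsPointedCone {d : ℕ} (C : Set (E d)) : Prop :=
  ∀ y, y ∈ C → -y ∈ C → y = 0

/-- `T` is a triangulation of `C` with rays through a subset of `gens`:
every member is a simplicial cone spanned by a linearly independent subset of
`gens`, the members cover `C`, and any two members intersect in a common
face. -/
def IsTriangulationOn {d : ℕ} (gens : Set (E d)) (C : Set (E d))
    (T : Set (Set (E d))) : Prop :=
  (∀ σ ∈ T, ∃ s : Finset (E d), ↑s ⊆ gens ∧
      LinearIndependent ℝ (fun v : s => (v : E d)) ∧ σ = coneOf (↑s : Set (E d))) ∧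
  ⋃₀ T = C ∧
  (∀ σ ∈ T, ∀ τ ∈ T, IsFace σ (σ ∩ τ) ∧ IsFace τ (σ ∩ τ))

/-! Let `a = x_p`, `b = x_q`, `D = cone(x_k : k < p)` and `W = span(x_k : k ≤ p)`, so `b ∉ W`.
A segment from `b` to a point of `W` meets `W` only at that endpoint, so when `b` is placed
every cone of the current triangulation is visible from it and gets coned over. Writing points
of `cone(D, b)` as `w + r • b` with `w ∈ W`, visibility from `a` relative to `cone(D, b)` of
`σ` or of `cone(σ, b)` is the same as visibility of `σ` relative to `D`. Hence, starting from
`A = Λ(x_k : k < p)`, both orders of placing `a` and `b` produce `A`, all `cone(σ, b)`, and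
`cone(σ, a)`, `cone(σ, a, b)` for the `σ ∈ A` visible from `a`. Later generators see the same
cone and the same triangulation in both orders. -/

section Cones

variable {d : ℕ}

lemma subset_addRay (σ : Set (E d)) (v : E d) : σ ⊆ addRay σ v :=
  fun y hy => ⟨y, hy, 0, le_rfl, by simp⟩

lemma addRay_mono {σ τ : Set (E d)} (h : σ ⊆ τ) (v : E d) : addRay σ v ⊆ addRay τ v := by
  rintro z ⟨y, hy, t, ht, rfl⟩
  exact ⟨y, h hy, t, ht, rfl⟩

lemma addRay_comm (σ : Set (E d)) (a b : E d) :
    addRay (addRay σ a) b = addRay (addRay σ b) a := by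
  ext z
  constructor <;>
  · rintro ⟨_, ⟨y, hy, s, hs, rfl⟩, t, ht, rfl⟩
    exact ⟨_, ⟨y, hy, t, ht, rfl⟩, s, hs, by module⟩

lemma addRay_subset_submodule {σ : Set (E d)} {v : E d} {W : Submodule ℝ (E d)}
    (hσ : σ ⊆ W) (hv : v ∈ W) : addRay σ v ⊆ W := by
  rintro z ⟨y, hy, t, -, rfl⟩
  exact W.add_mem (hσ hy) (W.smul_mem t hv)

lemma eq_zero_of_smul_mem_of_notMem {W : Submodule ℝ (E d)} {b : E d} (hb : b ∉ W) {t : ℝ}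
    (h : t • b ∈ W) : t = 0 :=
  not_not.mp fun ht => hb ((W.smul_mem_iff ht).mp h)

lemma add_smul_mem_addRay_iff {D : Set (E d)} {W : Submodule ℝ (E d)} {w b : E d} {r : ℝ}
    (hD : D ⊆ W) (hw : w ∈ W) (hb : b ∉ W) :
    w + r • b ∈ addRay D b ↔ w ∈ D ∧ 0 ≤ r := by
  constructor
  · rintro ⟨y, hy, t, ht, h⟩
    have hrt : r - t = 0 := by
      refine eq_zero_of_smul_mem_of_notMem hb ?_
      rw [show (r - t) • b = y - w by linear_combination (norm := module) h]
      exact W.sub_mem (hD hy) hw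
    obtain rfl : r = t := by linarith
    exact ⟨(add_right_cancel h).symm ▸ hy, ht⟩
  · rintro ⟨hwD, hr⟩
    exact ⟨w, hwD, r, hr, rfl⟩

lemma coneFin_succ {n : ℕ} (x : Fin (n + 1) → E d) :
    coneFin x = addRay (coneFin fun i => x i.castSucc) (x (Fin.last n)) := by
  ext z
  constructor
  · rintro ⟨c, hc, rfl⟩
    refine ⟨_, ⟨fun i => c i.castSucc, fun i => hc _, rfl⟩, c (Fin.last n), hc _, ?_⟩
    rw [Fin.sum_univ_castSucc]
  · rintro ⟨_, ⟨c, hc, rfl⟩, t, ht, rfl⟩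
    refine ⟨Fin.snoc c t, Fin.lastCases (by simpa using ht) (by simpa using hc), ?_⟩
    simp [Fin.sum_univ_castSucc]

lemma coneFin_subset_submodule {n : ℕ} {x : Fin n → E d} {W : Submodule ℝ (E d)}
    (h : ∀ i, x i ∈ W) : coneFin x ⊆ W := by
  rintro z ⟨c, -, rfl⟩
  exact W.sum_mem fun i _ => W.smul_mem _ (h i)

lemma coneFin_comp_perm_subset {n : ℕ} (x : Fin n → E d) (e : Equiv.Perm (Fin n)) :
    coneFin (x ∘ e) ⊆ coneFin x := by
  rintro z ⟨c, hc, rfl⟩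
  exact ⟨c ∘ e.symm, fun i => hc _, Fintype.sum_equiv e _ _ fun i => by simp⟩

lemma coneFin_comp_perm {n : ℕ} (x : Fin n → E d) (e : Equiv.Perm (Fin n)) :
    coneFin (x ∘ e) = coneFin x := by
  refine (coneFin_comp_perm_subset x e).antisymm ?_
  simpa [Function.comp_assoc] using coneFin_comp_perm_subset (x ∘ e) e.symm

end Cones

section Visibility

variable {d : ℕ} {D σ : Set (E d)} {a b : E d} {W : Submodule ℝ (E d)}

lemma VisibleFrom.mono {D' σ' : Set (E d)} (h : VisibleFrom D a σ) (hD : D' ⊆ D)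
    (hσ : σ' ⊆ σ) : VisibleFrom D' a σ' :=
  ⟨fun ha => h.1 (hD ha), fun y hy z hz hzD => h.2 y (hσ hy) z hz (hD hzD)⟩

lemma visibleFrom_of_notMem (hD : D ⊆ W) (hσ : σ ⊆ W) (hb : b ∉ W) :
    VisibleFrom D b σ := by
  refine ⟨fun h => hb (hD h), ?_⟩
  rintro y hy _ ⟨s, t, -, -, hst, rfl⟩ hz
  have hs : s = 0 := by
    refine eq_zero_of_smul_mem_of_notMem hb ?_
    simpa using W.sub_mem (hD hz) (W.smul_mem t (hσ hy))
  obtain rfl : t = 1 := by linarith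
  simp [hs]

lemma VisibleFrom.addRay_addRay (h : VisibleFrom D a σ) (hD : D ⊆ W) (hσ : σ ⊆ D)
    (ha : a ∈ W) (hb : b ∉ W) : VisibleFrom (addRay D b) a (addRay σ b) := by
  refine ⟨fun haD => h.1 ((add_smul_mem_addRay_iff (r := 0) hD ha hb).mp (by simpa)).1, ?_⟩
  rintro _ ⟨y, hy, t, -, rfl⟩ _ ⟨s₁, s₂, hs₁, hs₂, hs, rfl⟩ hz
  set w := s₁ • a + s₂ • y
  have hwW : w ∈ W := W.add_mem (W.smul_mem s₁ ha) (W.smul_mem s₂ (hD (hσ hy)))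
  have hwD : w ∈ D := by
    rw [show s₁ • a + s₂ • (y + t • b) = w + (s₂ * t) • b by module,
      add_smul_mem_addRay_iff hD hwW hb] at hz
    exact hz.1
  have hwy : w = y := h.2 y hy w ⟨s₁, s₂, hs₁, hs₂, hs, rfl⟩ hwD
  have hs₁ : s₁ = 0 := by
    by_contra hs₁
    have : s₁ • a = s₁ • y := by
      rw [← sub_eq_zero, ← smul_sub]
      linear_combination (norm := module) hwy - hs • y
    exact h.1 (smul_right_injective (E d) hs₁ this ▸ hσ hy)
  obtain rfl : s₂ = 1 := by linarith
  simp [hs₁]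

lemma visibleFrom_addRay_iff (hD : D ⊆ W) (hσ : σ ⊆ D) (ha : a ∈ W) (hb : b ∉ W) :
    VisibleFrom (addRay D b) a σ ↔ VisibleFrom D a σ :=
  ⟨fun h => h.mono (subset_addRay D b) le_rfl,
    fun h => (h.addRay_addRay hD hσ ha hb).mono le_rfl (subset_addRay σ b)⟩

lemma visibleFrom_addRay_addRay_iff (hD : D ⊆ W) (hσ : σ ⊆ D) (ha : a ∈ W) (hb : b ∉ W) :
    VisibleFrom (addRay D b) a (addRay σ b) ↔ VisibleFrom D a σ :=
  ⟨fun h => h.mono (subset_addRay D b) (subset_addRay σ b),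
    fun h => h.addRay_addRay hD hσ ha hb⟩

end Visibility

section Placing

variable {d : ℕ}

def lexStep (A : Set (Set (E d))) (D : Set (E d)) (v : E d) : Set (Set (E d)) :=
  A ∪ (addRay · v) '' {σ ∈ A | VisibleFrom D v σ}

lemma lexTri_succ {n : ℕ} (x : Fin (n + 1) → E d) :
    lexTri (n + 1) x = lexStep (lexTri n fun i => x i.castSucc)
      (coneFin fun i => x i.castSucc) (x (Fin.last n)) := by
  rw [lexTri, lexStep]
  congr 1
  ext τ
  simp [and_assoc, eq_comm]

variable {A : Set (Set (E d))} {D : Set (E d)} {a b v : E d} {W : Submodule ℝ (E d)}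

lemma subset_addRay_of_mem_lexStep (hA : ∀ σ ∈ A, σ ⊆ D) {σ : Set (E d)}
    (hσ : σ ∈ lexStep A D v) : σ ⊆ addRay D v := by
  rcases hσ with hσ | ⟨σ, ⟨hσ, -⟩, rfl⟩
  exacts [(hA σ hσ).trans (subset_addRay D v), addRay_mono (hA σ hσ) v]

lemma lexStep_of_forall_visibleFrom (h : ∀ σ ∈ A, VisibleFrom D v σ) :
    lexStep A D v = A ∪ (addRay · v) '' A := by
  rw [lexStep, Set.sep_eq_self_iff_mem_true.mpr h]

lemma lexStep_comm (hD : D ⊆ W) (ha : a ∈ W) (hb : b ∉ W) (hA : ∀ σ ∈ A, σ ⊆ D) :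
    lexStep (lexStep A D a) (addRay D a) b = lexStep (lexStep A D b) (addRay D b) a := by
  have hDa : addRay D a ⊆ W := addRay_subset_submodule hD ha
  have hb_vis : ∀ σ ∈ lexStep A D a, VisibleFrom (addRay D a) b σ := fun σ hσ =>
    visibleFrom_of_notMem hDa ((subset_addRay_of_mem_lexStep hA hσ).trans hDa) hb
  have hb_vis₀ : ∀ σ ∈ A, VisibleFrom D b σ := fun σ hσ =>
    visibleFrom_of_notMem hD ((hA σ hσ).trans hD) hb
  have ha_vis : {σ ∈ A ∪ (addRay · b) '' A | VisibleFrom (addRay D b) a σ} =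
      {σ ∈ A | VisibleFrom D a σ} ∪ (addRay · b) '' {σ ∈ A | VisibleFrom D a σ} := by
    ext σ
    constructor
    · rintro ⟨hσ | ⟨σ, hσ, rfl⟩, hvis⟩
      · exact .inl ⟨hσ, (visibleFrom_addRay_iff hD (hA σ hσ) ha hb).mp hvis⟩
      · exact .inr
          ⟨σ, ⟨hσ, (visibleFrom_addRay_addRay_iff hD (hA σ hσ) ha hb).mp hvis⟩, rfl⟩
    · rintro (⟨hσ, hvis⟩ | ⟨σ, ⟨hσ, hvis⟩, rfl⟩)
      · exact ⟨.inl hσ, (visibleFrom_addRay_iff hD (hA σ hσ) ha hb).mpr hvis⟩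
      · exact ⟨.inr ⟨σ, hσ, rfl⟩,
          (visibleFrom_addRay_addRay_iff hD (hA σ hσ) ha hb).mpr hvis⟩
  rw [lexStep_of_forall_visibleFrom hb_vis, lexStep_of_forall_visibleFrom hb_vis₀, lexStep,
    lexStep, ha_vis, Set.image_union, Set.image_union, Set.image_image, Set.image_image]
  simp_rw [addRay_comm _ a b]
  exact Set.union_union_union_comm _ _ _ _

lemma subset_coneFin_of_mem_lexTri {n : ℕ} {x : Fin n → E d} {σ : Set (E d)}
    (hσ : σ ∈ lexTri n x) : σ ⊆ coneFin x := by
  induction n generalizing σ with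
  | zero =>
    obtain rfl : σ = {0} := hσ
    rintro _ rfl
    exact ⟨0, fun _ => le_rfl, by simp⟩
  | succ n ih =>
    rw [lexTri_succ] at hσ
    rw [coneFin_succ]
    exact subset_addRay_of_mem_lexStep (fun _ hτ => ih hτ) hσ

end Placing

section Swap

variable {d : ℕ}

lemma lexTri_comp_swap_castSucc {n : ℕ} (x : Fin (n + 1) → E d) (p q : Fin n)
    (h : lexTri n ((fun i => x i.castSucc) ∘ Equiv.swap p q) = lexTri n fun i => x i.castSucc) :
    lexTri (n + 1) (x ∘ Equiv.swap p.castSucc q.castSucc) = lexTri (n + 1) x := by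
  have hinit : (fun i => (x ∘ Equiv.swap p.castSucc q.castSucc) i.castSucc) =
      (fun i => x i.castSucc) ∘ Equiv.swap p q := by
    funext i
    simp [(Fin.castSucc_injective n).swap_apply]
  have hlast : (x ∘ Equiv.swap p.castSucc q.castSucc) (Fin.last n) = x (Fin.last n) := by
    simp [Equiv.swap_apply_of_ne_of_ne (Fin.castSucc_lt_last p).ne'
      (Fin.castSucc_lt_last q).ne']
  rw [lexTri_succ, lexTri_succ, hinit, hlast, coneFin_comp_perm, h]

lemma lexTri_comp_swap_last {m : ℕ} (x : Fin (m + 1 + 1) → E d)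
    (hb : x (Fin.last (m + 1)) ∉ Submodule.span ℝ (x '' Set.Iic (Fin.last m).castSucc)) :
    lexTri (m + 1 + 1) (x ∘ Equiv.swap (Fin.last m).castSucc (Fin.last (m + 1))) =
      lexTri (m + 1 + 1) x := by
  have hD : coneFin (fun i : Fin m => x i.castSucc.castSucc) ⊆
      Submodule.span ℝ (x '' Set.Iic (Fin.last m).castSucc) :=
    coneFin_subset_submodule fun i => Submodule.subset_span
      ⟨_, Fin.castSucc_le_castSucc_iff.mpr (Fin.le_last i.castSucc), rfl⟩
  have ha : x (Fin.last m).castSucc ∈ Submodule.span ℝ (x '' Set.Iic (Fin.last m).castSucc) :=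
    Submodule.subset_span ⟨_, Set.mem_Iic.mpr le_rfl, rfl⟩
  have hfix (i : Fin m) :
      Equiv.swap (Fin.last m).castSucc (Fin.last (m + 1)) i.castSucc.castSucc =
        i.castSucc.castSucc :=
    Equiv.swap_apply_of_ne_of_ne (by simp [(Fin.castSucc_lt_last i).ne])
      (Fin.castSucc_lt_last _).ne
  simp only [lexTri_succ, coneFin_succ, Function.comp_apply, hfix, Equiv.swap_apply_left,
    Equiv.swap_apply_right]
  exact (lexStep_comm hD ha hb fun σ hσ => subset_coneFin_of_mem_lexTri hσ).symm

theorem lexTri_comp_swap_of_notMem_span {n : ℕ} (x : Fin n → E d) (p q : Fin n)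
    (hpq : (p : ℕ) + 1 = q) (hb : x q ∉ Submodule.span ℝ (x '' Set.Iic p)) :
    lexTri n (x ∘ Equiv.swap p q) = lexTri n x := by
  induction n with
  | zero => exact q.elim0
  | succ n ih =>
    cases q using Fin.lastCases with
    | last =>
      obtain ⟨m, rfl⟩ : ∃ m, n = m + 1 := ⟨n - 1, by simp at hpq; omega⟩
      obtain rfl : p = (Fin.last m).castSucc := Fin.ext (by simp at hpq ⊢; omega)
      exact lexTri_comp_swap_last x hb
    | cast q =>
      obtain ⟨p, rfl⟩ : ∃ p' : Fin n, p = p'.castSucc :=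
        ⟨⟨p, by simp at hpq; omega⟩, rfl⟩
      refine lexTri_comp_swap_castSucc x p q (ih _ p q (by simpa using hpq) ?_)
      rwa [← Fin.image_castSucc_Iic, ← Set.image_comp] at hb

end Swap

section Dimension

variable {d : ℕ}

lemma span_coneOf (s : Set (E d)) : Submodule.span ℝ (coneOf s) = Submodule.span ℝ s := by
  refine le_antisymm (Submodule.span_le.mpr ?_) (Submodule.span_mono fun y hy => ?_)
  · rintro _ ⟨t, c, hts, -, rfl⟩
    exact Submodule.sum_mem _ fun v hv => Submodule.smul_mem _ _ (Submodule.subset_span (hts hv))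
  · exact ⟨{y}, fun _ => 1, by simpa using hy, fun _ => zero_le_one, by simp⟩

lemma notMem_span_of_setDim_lt {n : ℕ} {x : Fin n → E d} {p q : Fin n}
    (hpq : (p : ℕ) + 1 = q)
    (hdim : setDim (coneOf (x '' {k | k ≤ p})) < setDim (coneOf (x '' {k | k ≤ q}))) :
    x q ∉ Submodule.span ℝ (x '' Set.Iic p) := by
  intro hq
  refine hdim.not_ge ?_
  rw [setDim, setDim, span_coneOf, span_coneOf]
  refine Submodule.finrank_mono (Submodule.span_le.mpr ?_)
  rintro _ ⟨k, hk, rfl⟩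
  obtain hk | rfl : k ≤ p ∨ k = q := by
    simp only [Set.mem_ofPred_eq, Fin.le_def, Fin.ext_iff] at hk ⊢
    omega
  exacts [Submodule.subset_span ⟨k, hk, rfl⟩, hq]

end Dimension

/-- `p` and `q` are the 0-indexed positions of `x_{i-1}` and `x_i`. -/
theorem lexTri_swap {d n : ℕ} (x : Fin n → E d) (p q : Fin n)
    (hpq : (p : ℕ) + 1 = (q : ℕ))
    (hdim : setDim (coneOf (x '' {k | k ≤ p})) <
            setDim (coneOf (x '' {k | k ≤ q}))) :
    lexTri n x = lexTri n (x ∘ Equiv.swap p q) :=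
  (lexTri_comp_swap_of_notMem_span x p q hpq (notMem_span_of_setDim_lt hpq hdim)).symm
end

section
/- Let x_1,...,x_n ∈ ℝ^d span a cone of dimension d. Let (i_1,...,i_d) be the lexicographically smallest index vector of a rank-d subset of {x_1,...,x_n} and let j_1 < ... < j_{n-d} be the complementary indices. Then Λ(x_1,...,x_n) = Λ(x_{i_1},...,x_{i_d}, x_{j_1},...,x_{j_{n-d}}). -/
open Finset

/-!
Placing a generator `u` outside the linear span `S` of the generators placed so far commutes with
placing a generator `v ∈ S`: every cell of the current triangulation lies in `S`, hence is visible
from `u`, and inside `S` the ray through `u` changes neither the cone nor which cells are visible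
from `v`. The lexicographically smallest basis `x_{i_1}, …, x_{i_d}` is greedy: every other
generator lies in the span of the basis vectors of smaller index, since otherwise an exchange would
produce a lexicographically smaller basis. So each `x_j` can be moved past all later basis vectors,
which sorts `x_1, …, x_n` into `x_{i_1}, …, x_{i_d}, x_{j_1}, …, x_{j_{n-d}}` without changing `Λ`.
-/

lemma Finset.orderEmbOfFin_eq_of_card_filter_lt {α : Type*} [LinearOrder α] {K : Finset α}
    {k : ℕ} (h : #K = k) {a : α} (ha : a ∈ K) {s : Fin k} (hs : #{b ∈ K | b < a} = s) :
    K.orderEmbOfFin h s = a := by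
  set f := K.orderEmbOfFin h
  obtain ⟨r, rfl⟩ : a ∈ Set.range f := by simpa [f] using ha
  have hbelow : {b ∈ K | b < f r} = (Iio r).map f.toEmbedding := by
    ext b
    simp only [mem_filter, mem_map, mem_Iio, RelEmbedding.coe_toEmbedding]
    constructor
    · rintro ⟨hb, hbr⟩
      obtain ⟨r', rfl⟩ : b ∈ Set.range f := by simpa [f] using hb
      exact ⟨r', f.lt_iff_lt.mp hbr, rfl⟩
    · rintro ⟨r', hr', rfl⟩
      exact ⟨K.orderEmbOfFin_mem h r', f.lt_iff_lt.mpr hr'⟩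
  rw [hbelow, card_map, Fin.card_Iio] at hs
  rw [Fin.ext hs.symm]

lemma StrictMono.lt_iff_val_lt_card_filter {α : Type*} [LinearOrder α] {k : ℕ}
    {i : Fin k → α} (hi : StrictMono i) (q : α) (s : Fin k) :
    i s < q ↔ (s : ℕ) < #{r | i r < q} := by
  constructor
  · intro hs
    calc (s : ℕ) < #(Iic s) := by simp
      _ ≤ #{r | i r < q} := card_le_card fun r hr => by
        simpa using (hi.monotone (mem_Iic.mp hr)).trans_lt hs
  · intro hs
    by_contra hsq
    have : #{r | i r < q} ≤ s := by
      calc #{r | i r < q} ≤ #(Iio s) := card_le_card fun r hr => by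
            simpa using hi.lt_iff_lt.mp ((mem_filter.mp hr).2.trans_le (not_lt.mp hsq))
        _ = s := Fin.card_Iio s
    omega

lemma StrictMono.piLex_orderEmbOfFin_replace {α : Type*} [LinearOrder α] {k : ℕ}
    {i : Fin k → α} (hi : StrictMono i) {q : α} (hq : q ∉ Set.range i) {s₀ : Fin k}
    (hqs₀ : q < i s₀) (hN : #(insert q ((univ.erase s₀).image i)) = k) :
    Pi.Lex (· < ·) (· < ·) ((insert q ((univ.erase s₀).image i)).orderEmbOfFin hN) i := by
  set t := #{s | i s < q}
  have hlt_iff := hi.lt_iff_val_lt_card_filter q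
  have ht : t < k := by
    have := (hlt_iff s₀).not.mp (not_lt.mpr hqs₀.le)
    omega
  have hcount : ∀ c ≤ q, #{a ∈ insert q ((univ.erase s₀).image i) | a < c} = #{s | i s < c} := by
    intro c hc
    rw [← card_image_of_injective _ hi.injective]
    congr 1
    ext a
    simp only [mem_filter, mem_insert, mem_image, mem_erase, mem_univ, true_and]
    grind
  -- The new tuple agrees with `i` before position `t` and has the entry `q < i t` at `t`.
  refine ⟨⟨t, ht⟩, fun s hs => ?_, ?_⟩
  · have hsq : i s < q := (hlt_iff s).mpr hs
    refine orderEmbOfFin_eq_of_card_filter_lt hN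
      (mem_insert_of_mem (mem_image_of_mem i (mem_erase.mpr ⟨?_, mem_univ _⟩))) ?_
    · rintro rfl
      exact lt_asymm hsq hqs₀
    · rw [hcount _ hsq.le]
      simp_rw [hi.lt_iff_lt, filter_gt_eq_Iio, Fin.card_Iio]
  · rw [orderEmbOfFin_eq_of_card_filter_lt hN (mem_insert_self _ _) (hcount q le_rfl)]
    exact lt_of_le_of_ne (not_lt.mp fun h => lt_irrefl t ((hlt_iff _).mp h))
      fun h => hq ⟨_, h.symm⟩

open Submodule in
lemma Module.Basis.span_insert_image_compl_eq_top {ι K V : Type*} [DivisionRing K]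
    [AddCommGroup V] [Module K V] (b : Basis ι K V) {v : V} {j : ι} (h : b.repr v j ≠ 0) :
    span K (insert v (b '' {j}ᶜ)) = ⊤ := by
  have hrange : Set.range b ⊆ insert (b j) (b '' {j}ᶜ) := by
    rintro _ ⟨r, rfl⟩
    by_cases hr : r = j
    · exact hr ▸ Set.mem_insert _ _
    · exact Set.mem_insert_of_mem _ ⟨r, hr, rfl⟩
  have hv : v ∉ span K (b '' {j}ᶜ) := by
    rw [b.mem_span_image]
    exact fun hsub => hsub (Finsupp.mem_support_iff.mpr h) rfl
  have hbj : b j ∈ span K (insert v (b '' {j}ᶜ)) :=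
    mem_span_insert_exchange (span_mono hrange (b.mem_span v)) hv
  rw [eq_top_iff, ← b.span_eq, span_le]
  exact hrange.trans (Set.insert_subset hbj ((Set.subset_insert _ _).trans subset_span))

open Submodule in
theorem mem_span_image_of_lexMin {K V : Type*} [DivisionRing K] [AddCommGroup V] [Module K V]
    {n k : ℕ} (x : Fin n → V) {i : Fin k → Fin n} (hi : StrictMono i)
    (hind : LinearIndependent K (x ∘ i)) (hspan : ⊤ ≤ span K (Set.range (x ∘ i)))
    (hmin : ∀ i' : Fin k → Fin n, StrictMono i' → LinearIndependent K (x ∘ i') →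
      ¬ Pi.Lex (· < ·) (· < ·) i' i)
    {q : Fin n} (hq : q ∉ Set.range i) : x q ∈ span K ((x ∘ i) '' {s | i s < q}) := by
  classical
  set b := Module.Basis.mk hind hspan
  have hb : ⇑b = x ∘ i := Module.Basis.coe_mk hind hspan
  by_contra hq'
  obtain ⟨s₀, hs₀, hqs₀⟩ : ∃ s₀, b.repr (x q) s₀ ≠ 0 ∧ q < i s₀ := by
    rw [← hb, b.mem_span_image, Set.not_subset] at hq'
    obtain ⟨s₀, hs₀, hs₀q⟩ := hq'
    exact ⟨s₀, Finsupp.mem_support_iff.mp hs₀,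
      lt_of_le_of_ne (not_lt.mp hs₀q) fun h => hq ⟨s₀, h.symm⟩⟩
  set N := insert q ((univ.erase s₀).image i)
  have hN : #N = k := by
    rw [card_insert_of_notMem fun h => hq (by grind), card_image_of_injective _ hi.injective,
      card_erase_of_mem (mem_univ _), card_univ, Fintype.card_fin, Nat.sub_add_cancel s₀.pos]
  -- Exchanging `x (i s₀)` for `x q` gives a lexicographically smaller basis.
  refine hmin _ (N.orderEmbOfFin hN).strictMono ?_ (hi.piLex_orderEmbOfFin_replace hq hqs₀ hN)
  refine linearIndependent_of_top_le_span_of_card_eq_finrank ?_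
    (by rw [Module.finrank_eq_card_basis b])
  rw [Set.range_comp, range_orderEmbOfFin, ← Module.Basis.span_insert_image_compl_eq_top b hs₀, hb]
  refine le_of_eq (congrArg _ ?_)
  simp [N, Set.image_insert_eq, Set.image_image, Set.compl_eq_univ_sdiff]

lemma List.filter_mem_range_finRange {n k : ℕ} {f : Fin k → Fin n} (hf : StrictMono f)
    [DecidablePred (· ∈ Set.range f)] :
    (List.finRange n).filter (· ∈ Set.range f) = List.ofFn f :=
  ((List.sortedLT_finRange n).pairwise.filter _).eq_of_mem_iff hf.sortedLT_ofFn.pairwise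
    fun a => by simp [List.mem_ofFn]

lemma List.filter_notMem_range_finRange {n k m : ℕ} {i : Fin k → Fin n} {j : Fin m → Fin n}
    (hj : StrictMono j) (hcomp : Set.range i ∪ Set.range j = Set.univ)
    (hdisj : _root_.Disjoint (Set.range i) (Set.range j)) [DecidablePred (· ∈ Set.range i)] :
    (List.finRange n).filter (· ∉ Set.range i) = List.ofFn j := by
  classical
  rw [← List.filter_mem_range_finRange hj]
  refine List.filter_congr fun a _ => ?_
  have hcover := Set.eq_univ_iff_forall.mp hcomp a
  have hsep := @Set.disjoint_left.mp hdisj a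
  simp only [Set.mem_union] at hcover
  simp only [decide_eq_decide]
  tauto

namespace LexTri

variable {d : ℕ}

section Visibility

variable {S : Submodule ℝ (E d)} {D D' σ σ' : Set (E d)} {u v : E d}

lemma eq_of_add_smul_eq_add_smul {p p' : E d} {r r' : ℝ} (hp : p ∈ S) (hp' : p' ∈ S)
    (hu : u ∉ S) (h : p + r • u = p' + r' • u) : p = p' ∧ r = r' := by
  have hr : r = r' := by
    by_contra hne
    have hmem : (r - r') • u ∈ S := by
      rw [sub_smul, show r • u - r' • u = p' - p by rw [sub_eq_sub_iff_add_eq_add, add_comm, h]]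
      exact S.sub_mem hp' hp
    exact hu ((S.smul_mem_iff (sub_ne_zero.mpr hne)).mp hmem)
  subst hr
  exact ⟨add_right_cancel h, rfl⟩

lemma subset_addRay (σ : Set (E d)) (a : E d) : σ ⊆ addRay σ a :=
  fun y hy => ⟨y, hy, 0, le_rfl, by simp⟩

lemma addRay_mono (h : σ ⊆ σ') (a : E d) : addRay σ a ⊆ addRay σ' a := by
  rintro z ⟨y, hy, t, ht, rfl⟩
  exact ⟨y, h hy, t, ht, rfl⟩

lemma addRay_comm (σ : Set (E d)) (a b : E d) :
    addRay (addRay σ a) b = addRay (addRay σ b) a := by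
  ext z
  constructor <;>
  · rintro ⟨y, ⟨w, hw, t, ht, rfl⟩, r, hr, rfl⟩
    exact ⟨_, ⟨w, hw, r, hr, rfl⟩, t, ht, by abel⟩

lemma addRay_subset (hσ : σ ⊆ S) (ha : u ∈ S) : addRay σ u ⊆ S := by
  rintro z ⟨y, hy, t, -, rfl⟩
  exact S.add_mem (hσ hy) (S.smul_mem t ha)

lemma addRay_inter_eq (hD : D ⊆ S) (hu : u ∉ S) : addRay D u ∩ S = D := by
  refine Set.Subset.antisymm ?_ fun y hy => ⟨subset_addRay D u hy, hD hy⟩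
  rintro z ⟨⟨y, hy, t, -, rfl⟩, hz⟩
  obtain ⟨hy', -⟩ := eq_of_add_smul_eq_add_smul (r := 0) (r' := t) hz (hD hy) hu (by simp)
  rwa [hy']

lemma VisibleFrom.mono (h : VisibleFrom D' v σ') (hD : D ⊆ D') (hσ : σ ⊆ σ') :
    VisibleFrom D v σ :=
  ⟨fun hv => h.1 (hD hv), fun y hy z hz hzD => h.2 y (hσ hy) z hz (hD hzD)⟩

lemma visibleFrom_congr (h : D ∩ S = D' ∩ S) (hv : v ∈ S) (hσ : σ ⊆ S) :
    VisibleFrom D v σ ↔ VisibleFrom D' v σ := by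
  have hmem : ∀ z ∈ S, z ∈ D ↔ z ∈ D' := fun z hz => by
    simpa [hz] using Set.ext_iff.mp h z
  have hseg : ∀ y ∈ σ, segment ℝ v y ⊆ S := fun y hy => S.convex.segment_subset hv (hσ hy)
  simp only [VisibleFrom, hmem v hv]
  refine and_congr_right fun _ => forall₂_congr fun y hy => forall₂_congr fun z hz => ?_
  rw [hmem z (hseg y hy hz)]

lemma visibleFrom_of_notMem (hD : D ⊆ S) (hσ : σ ⊆ S) (hu : u ∉ S) : VisibleFrom D u σ := by
  refine ⟨fun h => hu (hD h), ?_⟩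
  rintro y hy z ⟨a, b, -, -, hab, rfl⟩ hz
  obtain ⟨-, rfl⟩ := eq_of_add_smul_eq_add_smul (r := a) (r' := 0) (S.smul_mem b (hσ hy)) (hD hz)
    hu (by rw [zero_smul, add_zero, add_comm])
  obtain rfl : b = 1 := by linarith
  simp

lemma VisibleFrom.addRay (h : VisibleFrom D v σ) (hD : D ⊆ S) (hσ : σ ⊆ D) (hv : v ∈ S)
    (hu : u ∉ S) : VisibleFrom (addRay D u) v (addRay σ u) := by
  refine ⟨fun hvD => h.1 ((addRay_inter_eq hD hu).subset ⟨hvD, hv⟩), ?_⟩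
  rintro _ ⟨w, hw, t, -, rfl⟩ _ ⟨a, b, ha, hb, hab, rfl⟩ ⟨p, hp, r, -, hz⟩
  -- The `S`-component `a • v + b • w` of the point lies on `[v, w]` and in `D`, hence equals `w`.
  have hvw : a • v + b • w ∈ S := S.add_mem (S.smul_mem a hv) (S.smul_mem b (hD (hσ hw)))
  obtain ⟨hp_eq, -⟩ := eq_of_add_smul_eq_add_smul (hD hp) hvw hu
    (by rw [← hz, smul_add, smul_smul, add_assoc])
  have hw' : a • v + b • w = w := h.2 w hw _ ⟨a, b, ha, hb, hab, rfl⟩ (hp_eq ▸ hp)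
  have ha0 : a = 0 := by
    have hvw : a • (v - w) = 0 := by
      rw [← sub_eq_zero.mpr hw', eq_sub_of_add_eq' hab]; module
    refine (smul_eq_zero.mp hvw).resolve_right fun h' => h.1 ?_
    exact sub_eq_zero.mp h' ▸ hσ hw
  obtain rfl : b = 1 := by linarith
  simp [ha0]

end Visibility

section Placing

variable {S S' : Submodule ℝ (E d)} {D σ : Set (E d)} {T : Set (Set (E d))} {u v : E d}

def newCones (D : Set (E d)) (a : E d) (T : Set (Set (E d))) : Set (Set (E d)) :=
  {τ | ∃ σ ∈ T, VisibleFrom D a σ ∧ τ = addRay σ a}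

/-- A placing state is the pair (cone, triangulation) of the generators placed so far. -/
def placeStep (s : Set (E d) × Set (Set (E d))) (a : E d) : Set (E d) × Set (Set (E d)) :=
  (addRay s.1 a, s.2 ∪ newCones s.1 a s.2)

lemma addRay_coneFin_castSucc {n : ℕ} (x : Fin (n + 1) → E d) :
    addRay (coneFin fun i => x i.castSucc) (x (Fin.last n)) = coneFin x := by
  ext y
  constructor
  · rintro ⟨_, ⟨c, hc, rfl⟩, t, ht, rfl⟩
    refine ⟨Fin.snoc c t, fun i => Fin.lastCases (by simpa) (fun j => by simpa using hc j) i, ?_⟩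
    simp [Fin.sum_univ_castSucc]
  · rintro ⟨c, hc, rfl⟩
    exact ⟨_, ⟨fun i => c i.castSucc, fun i => hc _, rfl⟩, c (Fin.last n), hc _,
      Fin.sum_univ_castSucc _⟩

lemma foldl_placeStep_ofFn {n : ℕ} (x : Fin n → E d) :
    (List.ofFn x).foldl placeStep ({0}, {{0}}) = (coneFin x, lexTri n x) := by
  induction n with
  | zero =>
    refine Prod.ext (Set.ext fun y => ?_) rfl
    simp [coneFin]
  | succ n ih =>
    rw [List.ofFn_succ', List.concat_eq_append, List.foldl_concat, ih]
    exact Prod.ext (addRay_coneFin_castSucc x) rfl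

lemma newCones_union (D : Set (E d)) (a : E d) (T₁ T₂ : Set (Set (E d))) :
    newCones D a (T₁ ∪ T₂) = newCones D a T₁ ∪ newCones D a T₂ := by
  ext τ
  simp only [newCones, Set.mem_union, Set.mem_ofPred_eq]
  grind

lemma newCones_congr {D' : Set (E d)} (h : ∀ σ ∈ T, VisibleFrom D v σ ↔ VisibleFrom D' v σ) :
    newCones D v T = newCones D' v T := by
  ext τ
  simp only [newCones, Set.mem_ofPred_eq]
  grind

lemma newCones_eq_image (h : ∀ σ ∈ T, VisibleFrom D u σ) :
    newCones D u T = (addRay · u) '' T := by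
  ext τ
  simp only [newCones, Set.mem_image, Set.mem_ofPred_eq]
  grind

lemma newCones_addRay_image (hD : D ⊆ S) (hT : ∀ σ ∈ T, σ ⊆ D) (hv : v ∈ S) (hu : u ∉ S) :
    newCones (addRay D u) v ((addRay · u) '' T) = (addRay · u) '' newCones D v T := by
  ext τ
  constructor
  · rintro ⟨_, ⟨σ, hσ, rfl⟩, hvis, rfl⟩
    exact ⟨addRay σ v, ⟨σ, hσ, VisibleFrom.mono hvis (subset_addRay D u) (subset_addRay σ u), rfl⟩,
      addRay_comm σ v u⟩
  · rintro ⟨_, ⟨σ, hσ, hvis, rfl⟩, rfl⟩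
    exact ⟨addRay σ u, ⟨σ, hσ, rfl⟩, VisibleFrom.addRay hvis hD (hT σ hσ) hv hu, addRay_comm σ v u⟩

def SupportedIn (S : Submodule ℝ (E d)) (s : Set (E d) × Set (Set (E d))) : Prop :=
  s.1 ⊆ S ∧ ∀ σ ∈ s.2, σ ⊆ s.1

lemma SupportedIn.mono {s : Set (E d) × Set (Set (E d))} (h : SupportedIn S s) (hS : S ≤ S') :
    SupportedIn S' s :=
  ⟨h.1.trans hS, h.2⟩

lemma SupportedIn.placeStep {s : Set (E d) × Set (Set (E d))} (h : SupportedIn S s)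
    (ha : u ∈ S) : SupportedIn S (placeStep s u) := by
  refine ⟨addRay_subset h.1 ha, ?_⟩
  rintro σ (hσ | ⟨σ', hσ', -, rfl⟩)
  · exact (h.2 σ hσ).trans (subset_addRay _ _)
  · exact addRay_mono (h.2 σ' hσ') u

theorem placeStep_comm {s : Set (E d) × Set (Set (E d))} (hs : SupportedIn S s) (hv : v ∈ S)
    (hu : u ∉ S) : placeStep (placeStep s v) u = placeStep (placeStep s u) v := by
  obtain ⟨⟨D, T⟩, hD, hT⟩ := s, hs
  refine Prod.ext (addRay_comm D v u) ?_
  have hTS : ∀ σ ∈ T, σ ⊆ S := fun σ hσ => (hT σ hσ).trans hD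
  have hNS : ∀ σ ∈ T ∪ newCones D v T, σ ⊆ S := by
    rintro σ (hσ | ⟨σ', hσ', -, rfl⟩)
    exacts [hTS σ hσ, addRay_subset (hTS σ' hσ') hv]
  have hvis_old : ∀ σ ∈ T, VisibleFrom (addRay D u) v σ ↔ VisibleFrom D v σ := fun σ hσ =>
    visibleFrom_congr (by rw [addRay_inter_eq hD hu, Set.inter_eq_left.mpr hD]) hv (hTS σ hσ)
  simp only [placeStep]
  rw [newCones_eq_image fun σ hσ => visibleFrom_of_notMem (addRay_subset hD hv) (hNS σ hσ) hu,
    newCones_eq_image fun σ hσ => visibleFrom_of_notMem hD (hTS σ hσ) hu, newCones_union,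
    newCones_congr hvis_old, newCones_addRay_image hD hT hv hu, Set.image_union,
    Set.union_union_union_comm]

theorem foldl_placeStep_comm {B : List (E d)} {s : Set (E d) × Set (Set (E d))}
    (hs : SupportedIn S s) (hB : ∀ b ∈ B, b ∈ S) (hu : u ∉ S) :
    B.foldl placeStep (placeStep s u) = placeStep (B.foldl placeStep s) u := by
  induction B generalizing s with
  | nil => rfl
  | cons b B ih =>
    have hb : b ∈ S := hB b (List.mem_cons_self ..)
    rw [List.foldl_cons, List.foldl_cons, ← placeStep_comm hs hb hu,
      ih (hs.placeStep hb) fun b' hb' => hB b' (List.mem_cons_of_mem _ hb')]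

end Placing

section Partition

open Submodule

variable {ι : Type*} [LinearOrder ι] {x : ι → E d} {p : ι → Prop} {S : Submodule ℝ (E d)}
  {a : ι} {l : List ι}

def IsGreedySelection (x : ι → E d) (p : ι → Prop) (S : Submodule ℝ (E d)) (l : List ι) :
    Prop :=
  ∀ a ∈ l, p a ↔ x a ∉ S ⊔ span ℝ (x '' {r | r ∈ l ∧ p r ∧ r < a})

lemma IsGreedySelection.head (h : IsGreedySelection x p S (a :: l))
    (hl : (a :: l).Pairwise (· < ·)) : p a ↔ x a ∉ S := by
  have hempty : {r | r ∈ a :: l ∧ p r ∧ r < a} = ∅ := by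
    ext r
    simp only [List.mem_cons, Set.mem_ofPred_eq, Set.mem_empty_iff_false, iff_false]
    rintro ⟨rfl | hr, -, hra⟩
    exacts [lt_irrefl r hra, lt_asymm (List.rel_of_pairwise_cons hl hr) hra]
  rw [h a (List.mem_cons_self ..), hempty, Set.image_empty, span_empty, sup_bot_eq]

open Classical in
lemma IsGreedySelection.tail (h : IsGreedySelection x p S (a :: l))
    (hl : (a :: l).Pairwise (· < ·)) :
    IsGreedySelection x p (if p a then S ⊔ span ℝ {x a} else S) l := by
  intro b hb
  have hbelow : {r | r ∈ a :: l ∧ p r ∧ r < b} = {r | r = a ∧ p a} ∪ {r | r ∈ l ∧ p r ∧ r < b} := by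
    ext r
    have := List.rel_of_pairwise_cons hl hb
    simp only [List.mem_cons, Set.mem_union, Set.mem_ofPred_eq]
    grind
  rw [h b (List.mem_cons_of_mem _ hb), hbelow, Set.image_union, span_union, ← sup_assoc]
  split_ifs with ha <;> simp [ha]

theorem foldl_placeStep_partition [DecidablePred p] (hl : l.Pairwise (· < ·))
    (hgreedy : IsGreedySelection x p S l) {s : Set (E d) × Set (Set (E d))}
    (hs : SupportedIn S s) {B : List (E d)} (hB : ∀ b ∈ B, b ∈ S) :
    (B ++ l.map x).foldl placeStep s
      = ((l.filter (p ·)).map x ++ B ++ (l.filter (¬p ·)).map x).foldl placeStep s := by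
  induction l generalizing S s B with
  | nil => simp
  | cons a l ih =>
    have htail := hgreedy.tail hl
    by_cases ha : p a
    · have hxa : x a ∉ S := (hgreedy.head hl).mp ha
      rw [if_pos ha] at htail
      have key := ih hl.of_cons htail ((hs.mono le_sup_left).placeStep
        (mem_sup_right (mem_span_singleton_self _))) (fun b hb => mem_sup_left (hB b hb))
      simp only [List.foldl_append] at key
      simp [ha, List.foldl_append, key, ← foldl_placeStep_comm hs hB hxa]
    · have hxa : x a ∈ S := not_not.mp (mt (hgreedy.head hl).mpr ha)
      rw [if_neg ha] at htail
      have key := ih hl.of_cons htail hs (B := B ++ [x a])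
        (by simpa [or_imp, forall_and] using ⟨hB, hxa⟩)
      simpa [List.filter_cons, ha] using key

open Classical in
lemma isGreedySelection_of_lexMin {n k : ℕ} (x : Fin n → E d) {i : Fin k → Fin n}
    (hi : StrictMono i) (hind : LinearIndependent ℝ (x ∘ i))
    (hspan : ⊤ ≤ span ℝ (Set.range (x ∘ i)))
    (hmin : ∀ i' : Fin k → Fin n, StrictMono i' → LinearIndependent ℝ (x ∘ i') →
      ¬ Pi.Lex (· < ·) (· < ·) i' i) :
    IsGreedySelection x (· ∈ Set.range i) ⊥ (List.finRange n) := by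
  rintro a -
  have himage : x '' {r | r ∈ List.finRange n ∧ r ∈ Set.range i ∧ r < a}
      = (x ∘ i) '' {s | i s < a} := by
    ext; simp
  rw [bot_sup_eq, himage]
  constructor
  · rintro ⟨s, rfl⟩
    exact hind.notMem_span_image (lt_irrefl (i s))
  · exact not_imp_comm.mp (mem_span_image_of_lexMin x hi hind hspan hmin)

end Partition

end LexTri

theorem lexTri_front_loading_general {d m : ℕ} (x : Fin (d + m) → E d)
    (i : Fin d → Fin (d + m)) (hi : StrictMono i)
    (hind : LinearIndependent ℝ (x ∘ i))
    (hmin : ∀ i' : Fin d → Fin (d + m), StrictMono i' →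
      LinearIndependent ℝ (x ∘ i') →
      ¬ Pi.Lex (· < ·) (· < ·) i' i)
    (j : Fin m → Fin (d + m)) (hj : StrictMono j)
    (hcomp : Set.range i ∪ Set.range j = Set.univ)
    (hdisj : Disjoint (Set.range i) (Set.range j)) :
    lexTri (d + m) x = lexTri (d + m) (Fin.append (x ∘ i) (x ∘ j)) := by
  classical
  have hpart := LexTri.foldl_placeStep_partition (List.sortedLT_finRange _).pairwise
    (LexTri.isGreedySelection_of_lexMin x hi hind
      (hind.span_eq_top_of_card_eq_finrank' (by simp)).ge hmin)
    (s := ({0}, {{0}})) ⟨by simp, by simp⟩ (B := []) (by simp)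
  rw [List.filter_mem_range_finRange hi, List.filter_notMem_range_finRange hj hcomp hdisj,
    List.nil_append, List.append_nil, ← List.ofFn_eq_map, List.map_ofFn, List.map_ofFn,
    ← List.ofFn_fin_append, LexTri.foldl_placeStep_ofFn, LexTri.foldl_placeStep_ofFn] at hpart
  exact congrArg Prod.snd hpart

/-- Let `x_1,…,x_n ∈ ℝ^d` (with `n = d + m`) span a cone of
dimension `d`. Let `(i_1,…,i_d)` be the lexicographically smallest index
vector of a rank-`d` subset of `{x_1,…,x_n}` and `j_1 < ⋯ < j_{n-d}` the
complementary indices. Then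
`Λ(x_1,…,x_n) = Λ(x_{i_1},…,x_{i_d}, x_{j_1},…,x_{j_{n-d}})`. -/
theorem lexTri_front_loading {d m : ℕ} (x : Fin (d + m) → E d)
    (hdim : setDim (coneFin x) = d)
    (i : Fin d → Fin (d + m)) (hi : StrictMono i)
    (hind : LinearIndependent ℝ (x ∘ i))
    (hmin : ∀ i' : Fin d → Fin (d + m), StrictMono i' →
      LinearIndependent ℝ (x ∘ i') →
      ¬ Pi.Lex (· < ·) (· < ·) i' i)
    (j : Fin m → Fin (d + m)) (hj : StrictMono j)
    (hcomp : Set.range i ∪ Set.range j = Set.univ)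
    (hdisj : Disjoint (Set.range i) (Set.range j)) :
    lexTri (d + m) x = lexTri (d + m) (Fin.append (x ∘ i) (x ∘ j)) :=
  lexTri_front_loading_general x i hi hind hmin j hj hcomp hdisj
end

section
/- Let σ ⊆ ℝ^d be a full-dimensional simplicial cone with integral generators v_1,...,v_d and let deg: ℤ^d → ℤ be a grading positive on σ \ {0}. With g_i = deg(v_i), E = ℤ^d ∩ par(v_1,...,v_d), and h_j = |{x ∈ E : deg x = j}|, the Hilbert series of σ satisfies Σ_{k≥0} |{x ∈ ℤ^d ∩ σ : deg x = k}| t^k = (h_0 + h_1 t + ... + h_s t^s) / ((1−t^{g_1})···(1−t^{g_d})) as formal power series. -/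
open Finset

/-- The lattice points of the semi-open parallelotope
`par(v_1,…,v_d) = {q_1v_1 + ⋯ + q_dv_d : 0 ≤ q_i < 1}`. -/
def parPoints {d : ℕ} (v : Fin d → (Fin d → ℤ)) : Set (Fin d → ℤ) :=
  {x | ∃ q : Fin d → ℝ, (∀ i, 0 ≤ q i ∧ q i < 1) ∧
        (fun j => (x j : ℝ)) = ∑ i, q i • (fun j => (v i j : ℝ))}

/-- The (free) monoid `M_σ = ℤ₊v_1 + ⋯ + ℤ₊v_d` generated by `v_1,…,v_d`. -/
def genMonoid {d : ℕ} (v : Fin d → (Fin d → ℤ)) : Set (Fin d → ℤ) :=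
  {m | ∃ c : Fin d → ℕ, m = ∑ i, (c i : ℤ) • v i}

/-!
Every lattice point of the cone is uniquely `x + ∑ cᵢ vᵢ` with `x` a lattice point of the
half-open parallelotope and `c ∈ ℕ^d`: writing the point as `∑ qᵢ vᵢ`, take `cᵢ = ⌊qᵢ⌋`, and
uniqueness is linear independence. The degree is additive along this decomposition, so the
Hilbert series of the cone is the degree polynomial of the parallelotope times the series of
`ℕ^d` weighted by `∑ cᵢ gᵢ`, which is `∏ᵢ ∑ₘ t^{m gᵢ} = ∏ᵢ (1 - t^{gᵢ})⁻¹`.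
-/

section Fibers

variable {α β : Type*}

def fiberAddEquiv (w : α → ℕ) (w' : β → ℕ) (k : ℕ) :
    {p : α × β // w p.1 + w' p.2 = k} ≃
      Σ ij : antidiagonal k, {a // w a = ij.1.1} × {b // w' b = ij.1.2} where
  toFun p := ⟨⟨(w p.1.1, w' p.1.2), mem_antidiagonal.2 p.2⟩, ⟨p.1.1, rfl⟩, ⟨p.1.2, rfl⟩⟩
  invFun s := ⟨(s.2.1, s.2.2), by rw [s.2.1.2, s.2.2.2]; exact mem_antidiagonal.1 s.1.2⟩
  left_inv _ := rfl
  right_inv := by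
    rintro ⟨⟨⟨i, j⟩, h⟩, ⟨a, ha⟩, ⟨b, hb⟩⟩
    obtain rfl : w a = i := ha
    obtain rfl : w' b = j := hb
    rfl

theorem finite_fiber_add {w : α → ℕ} {w' : β → ℕ} (hw : ∀ k, Finite {a // w a = k})
    (hw' : ∀ k, Finite {b // w' b = k}) (k : ℕ) :
    Finite {p : α × β // w p.1 + w' p.2 = k} :=
  .of_equiv _ (fiberAddEquiv w w' k).symm

theorem finite_fiber_pi {n : ℕ} {w : Fin n → α → ℕ} (hw : ∀ i k, Finite {a // w i a = k})
    (k : ℕ) : Finite {c : Fin n → α // ∑ i, w i (c i) = k} := by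
  induction n generalizing k with
  | zero => infer_instance
  | succ n ih =>
    have := finite_fiber_add (hw 0) (ih fun i => hw i.succ) k
    exact .of_equiv _ ((Fin.consEquiv fun _ => α).subtypeEquiv
      (p := fun p => w 0 p.1 + ∑ i, w i.succ (p.2 i) = k) fun p => by simp [Fin.sum_univ_succ])

theorem subsingleton_fiber_mul_const {g : ℕ} (hg : g ≠ 0) (k : ℕ) :
    Subsingleton {m : ℕ // m * g = k} :=
  ⟨fun m m' => Subtype.ext <|
    Nat.eq_of_mul_eq_mul_right (Nat.pos_of_ne_zero hg) (m.2.trans m'.2.symm)⟩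

theorem finite_fiber_linear {n : ℕ} {g : Fin n → ℕ} (hg : ∀ i, g i ≠ 0) (k : ℕ) :
    Finite {c : Fin n → ℕ // ∑ i, c i * g i = k} :=
  finite_fiber_pi (w := fun i m => m * g i)
    (fun i k => have := subsingleton_fiber_mul_const (hg i) k; inferInstance) k

end Fibers

namespace PowerSeries

variable {α β : Type*}

-- `Nat.card` of an infinite fibre is `0`, so only finite fibres are counted faithfully.
noncomputable def weightSeries (w : α → ℕ) : PowerSeries ℤ :=
  mk fun k => Nat.card {a // w a = k}

theorem weightSeries_congr {w : α → ℕ} {w' : β → ℕ} (e : α ≃ β) (h : ∀ a, w' (e a) = w a) :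
    weightSeries w' = weightSeries w := by
  ext k
  simp only [weightSeries, coeff_mk]
  exact congrArg _ (Nat.card_congr (e.subtypeEquiv fun a => by rw [h])).symm

theorem weightSeries_prod {w : α → ℕ} {w' : β → ℕ} (hw : ∀ k, Finite {a // w a = k})
    (hw' : ∀ k, Finite {b // w' b = k}) :
    weightSeries (fun p : α × β => w p.1 + w' p.2) = weightSeries w * weightSeries w' := by
  ext k
  rw [coeff_mul, weightSeries, coeff_mk, Nat.card_congr (fiberAddEquiv w w' k), Nat.card_sigma,
    ← sum_coe_sort (antidiagonal k)]
  simp [weightSeries, Nat.card_prod]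

theorem weightSeries_pi {n : ℕ} {w : Fin n → α → ℕ} (hw : ∀ i k, Finite {a // w i a = k}) :
    weightSeries (fun c : Fin n → α => ∑ i, w i (c i)) = ∏ i, weightSeries (w i) := by
  induction n with
  | zero =>
    ext k
    rcases k with _ | k <;> simp [weightSeries, coeff_one]
  | succ n ih =>
    rw [Fin.prod_univ_succ, ← ih fun i => hw i.succ,
      ← weightSeries_prod (hw 0) (finite_fiber_pi fun i => hw i.succ)]
    exact weightSeries_congr (Fin.consEquiv fun _ => α) fun p => by simp [Fin.sum_univ_succ]

theorem weightSeries_mul_const {g : ℕ} (hg : g ≠ 0) :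
    weightSeries (fun m : ℕ => m * g) = expand g hg (mk 1) := by
  ext k
  rw [coeff_expand, weightSeries, coeff_mk]
  split_ifs with h
  · obtain ⟨q, rfl⟩ := h
    rw [coeff_mk, Nat.mul_div_cancel_left q (Nat.pos_of_ne_zero hg), Pi.one_apply,
      Nat.card_eq_one_iff_unique.2 ⟨subsingleton_fiber_mul_const hg _, ⟨q, mul_comm q g⟩⟩,
      Nat.cast_one]
  · have : IsEmpty {m // m * g = k} := ⟨fun m => h ⟨m.1, ((mul_comm _ _).trans m.2).symm⟩⟩
    rw [Nat.card_of_isEmpty, Nat.cast_zero]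

theorem weightSeries_mul_const_mul_one_sub_X_pow {g : ℕ} (hg : g ≠ 0) :
    weightSeries (fun m : ℕ => m * g) * (1 - X ^ g) = 1 := by
  rw [weightSeries_mul_const hg, ← expand_X g hg, ← map_one (expand g hg), ← map_sub, ← map_mul,
    mk_one_mul_one_sub_eq_one, map_one]

theorem weightSeries_linear_mul_prod_one_sub_X_pow {n : ℕ} {g : Fin n → ℕ} (hg : ∀ i, g i ≠ 0) :
    weightSeries (fun c : Fin n → ℕ => ∑ i, c i * g i) * ∏ i, (1 - X ^ g i) = 1 := by
  rw [weightSeries_pi (w := fun i m => m * g i), ← prod_mul_distrib]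
  · exact prod_eq_one fun i _ => weightSeries_mul_const_mul_one_sub_X_pow (hg i)
  · exact fun i k => have := subsingleton_fiber_mul_const (hg i) k; inferInstance

theorem mk_ncard_sep_eq_weightSeries {α : Type*} {S : Set α} {f : α → ℤ} (hf : ∀ x ∈ S, 0 ≤ f x) :
    mk (fun k : ℕ => (({x ∈ S | f x = k}).ncard : ℤ)) =
      weightSeries (fun x : S => (f x).toNat) := by
  ext k
  rw [coeff_mk, weightSeries, coeff_mk, ← Nat.card_coe_set_eq]
  refine congrArg _ (Nat.card_congr ((Equiv.subtypeSubtypeEquivSubtypeInter _ _).symm.trans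
    (Equiv.subtypeEquivRight fun x => ?_)))
  have := hf x x.2
  omega

end PowerSeries

namespace SimplicialCone

variable {d : ℕ} {v : Fin d → Fin d → ℤ}

def latticeCone (v : Fin d → Fin d → ℤ) : Set (Fin d → ℤ) :=
  {z | (fun j => (z j : ℝ)) ∈ coneFin (fun i j => (v i j : ℝ))}

theorem cast_add_sum_nsmul (x : Fin d → ℤ) (c : Fin d → ℕ) :
    (fun j => ((x + ∑ i, c i • v i) j : ℝ)) =
      (fun j => (x j : ℝ)) + ∑ i, (c i : ℝ) • fun j => (v i j : ℝ) := by
  ext j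
  simp [Finset.sum_apply]

theorem cast_add_sum_nsmul_of_eq_sum {x : Fin d → ℤ} {q : Fin d → ℝ}
    (hx : (fun j => (x j : ℝ)) = ∑ i, q i • fun j => (v i j : ℝ)) (c : Fin d → ℕ) :
    (fun j => ((x + ∑ i, c i • v i) j : ℝ)) = ∑ i, (q i + c i) • fun j => (v i j : ℝ) := by
  simp only [cast_add_sum_nsmul, hx, add_smul, sum_add_distrib]

theorem add_sum_nsmul_mem_latticeCone {x : Fin d → ℤ} (hx : x ∈ parPoints v) (c : Fin d → ℕ) :
    x + ∑ i, c i • v i ∈ latticeCone v := by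
  obtain ⟨q, hq, hxq⟩ := hx
  exact ⟨fun i => q i + c i, fun i => add_nonneg (hq i).1 (c i).cast_nonneg,
    cast_add_sum_nsmul_of_eq_sum hxq c⟩

theorem parPoints_subset_latticeCone : parPoints v ⊆ latticeCone v := fun x hx => by
  simpa using add_sum_nsmul_mem_latticeCone hx 0

theorem exists_parPoints_add_sum_nsmul_eq {z : Fin d → ℤ} (hz : z ∈ latticeCone v) :
    ∃ c : Fin d → ℕ, ∃ x ∈ parPoints v, x + ∑ i, c i • v i = z := by
  obtain ⟨q, hq, hzq⟩ := hz
  set c : Fin d → ℕ := fun i => ⌊q i⌋₊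
  refine ⟨c, z - ∑ i, c i • v i, ⟨fun i => q i - c i, fun i => ⟨sub_nonneg.2 (Nat.floor_le (hq i)),
    by linarith [Nat.lt_floor_add_one (q i)]⟩, ?_⟩, sub_add_cancel _ _⟩
  have h := cast_add_sum_nsmul (v := v) (z - ∑ i, c i • v i) c
  rw [sub_add_cancel, hzq, ← sub_eq_iff_eq_add] at h
  simp only [← h, sub_smul, sum_sub_distrib]

theorem eq_of_add_sum_nsmul_eq (hv : LinearIndependent ℝ (fun i => (fun j => (v i j : ℝ))))
    {x x' : Fin d → ℤ} (hx : x ∈ parPoints v) (hx' : x' ∈ parPoints v) {c c' : Fin d → ℕ}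
    (h : x + ∑ i, c i • v i = x' + ∑ i, c' i • v i) : c = c' ∧ x = x' := by
  obtain ⟨q, hq, hxq⟩ := hx
  obtain ⟨q', hq', hxq'⟩ := hx'
  have hcoord : ∀ i, q i + c i = q' i + c' i := Fintype.linearIndependent_iffₛ.1 hv _ _ <| by
    rw [← cast_add_sum_nsmul_of_eq_sum hxq, ← cast_add_sum_nsmul_of_eq_sum hxq', h]
  have hc : c = c' := funext fun i => by
    have := congrArg Nat.floor (hcoord i)
    rwa [Nat.floor_add_natCast (hq i).1, Nat.floor_add_natCast (hq' i).1,
      Nat.floor_eq_zero.2 (hq i).2, Nat.floor_eq_zero.2 (hq' i).2, zero_add, zero_add] at this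
  subst hc
  exact ⟨rfl, add_right_cancel h⟩

noncomputable def parPointsEquiv (hv : LinearIndependent ℝ (fun i => (fun j => (v i j : ℝ)))) :
    (Fin d → ℕ) × parPoints v ≃ latticeCone v :=
  .ofBijective (fun p => ⟨p.2 + ∑ i, p.1 i • v i, add_sum_nsmul_mem_latticeCone p.2.2 p.1⟩)
    ⟨fun ⟨_, x⟩ ⟨_, x'⟩ h =>
      have h' := eq_of_add_sum_nsmul_eq hv x.2 x'.2 (congrArg Subtype.val h)
      Prod.ext h'.1 (Subtype.ext h'.2),
    fun z =>
      have ⟨c, x, hx, hz⟩ := exists_parPoints_add_sum_nsmul_eq z.2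
      ⟨(c, ⟨x, hx⟩), Subtype.ext hz⟩⟩

theorem finite_parPoints (v : Fin d → Fin d → ℤ) : (parPoints v).Finite := by
  refine (Set.finite_Icc (-∑ i, |v i|) (∑ i, |v i|)).subset ?_
  rintro x ⟨q, hq, hxq⟩
  have hbound (j : Fin d) : |x j| ≤ ∑ i, |v i j| := by
    have hxj : (x j : ℝ) = ∑ i, q i * v i j := by simpa using congrFun hxq j
    have : |(x j : ℝ)| ≤ ∑ i, |(v i j : ℝ)| := hxj ▸ (abs_sum_le_sum_abs _ _).trans
      (sum_le_sum fun i _ => by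
        rw [abs_mul, abs_of_nonneg (hq i).1]
        exact mul_le_of_le_one_left (abs_nonneg _) (hq i).2.le)
    exact_mod_cast this
  exact ⟨fun j => by simpa using neg_le_of_abs_le (hbound j),
    fun j => by simpa using le_of_abs_le (hbound j)⟩

def IsGrading (a : Fin d → ℤ) (v : Fin d → Fin d → ℤ) : Prop :=
  ∀ y ∈ coneFin (fun i j => (v i j : ℝ)), y ≠ 0 → 0 < ∑ i, (a i : ℝ) * y i

variable {a : Fin d → ℤ}

theorem IsGrading.dotProduct_nonneg (hpos : IsGrading a v) {z : Fin d → ℤ}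
    (hz : z ∈ latticeCone v) : 0 ≤ a ⬝ᵥ z := by
  by_cases h0 : (fun j => (z j : ℝ)) = 0
  · have : z = 0 := funext fun j => by simpa using congrFun h0 j
    simp [this]
  · exact (Int.cast_nonneg_iff (R := ℝ)).1 (by push_cast [dotProduct]; exact (hpos _ hz h0).le)

theorem IsGrading.dotProduct_generator_pos (hpos : IsGrading a v)
    (hv : LinearIndependent ℝ (fun i => (fun j => (v i j : ℝ)))) (i : Fin d) : 0 < a ⬝ᵥ v i := by
  have hmem : (fun j => (v i j : ℝ)) ∈ coneFin (fun i => (fun j => (v i j : ℝ))) :=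
    ⟨Pi.single i 1, fun j => by by_cases h : j = i <;> simp [h], by simp⟩
  exact (Int.cast_pos (R := ℝ)).1 (by push_cast [dotProduct]; exact hpos _ hmem (hv.ne_zero i))

theorem IsGrading.toNat_dotProduct_generator_ne_zero (hpos : IsGrading a v)
    (hv : LinearIndependent ℝ (fun i => (fun j => (v i j : ℝ)))) (i : Fin d) :
    (a ⬝ᵥ v i).toNat ≠ 0 := by
  have := hpos.dotProduct_generator_pos hv i
  omega

theorem toNat_dotProduct_add_sum_nsmul (hg : ∀ i, 0 ≤ a ⬝ᵥ v i) {x : Fin d → ℤ}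
    (hx : 0 ≤ a ⬝ᵥ x) (c : Fin d → ℕ) :
    (a ⬝ᵥ (x + ∑ i, c i • v i)).toNat = ∑ i, c i * (a ⬝ᵥ v i).toNat + (a ⬝ᵥ x).toNat := by
  have hdot : a ⬝ᵥ (x + ∑ i, c i • v i) = ∑ i, c i * (a ⬝ᵥ v i) + a ⬝ᵥ x := by
    rw [dotProduct_add, dotProduct_sum, add_comm]
    simp_rw [dotProduct_smul, nsmul_eq_mul]
  have hsum : 0 ≤ ∑ i, (c i : ℤ) * (a ⬝ᵥ v i) + a ⬝ᵥ x :=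
    add_nonneg (sum_nonneg fun i _ => mul_nonneg (c i).cast_nonneg (hg i)) hx
  apply Nat.cast_injective (R := ℤ)
  push_cast [hdot, Int.toNat_of_nonneg hsum, Int.toNat_of_nonneg hx, Int.toNat_of_nonneg (hg _)]
  rfl

open PowerSeries in
theorem weightSeries_latticeCone (hv : LinearIndependent ℝ (fun i => (fun j => (v i j : ℝ))))
    (hpos : IsGrading a v) :
    weightSeries (fun z : latticeCone v => (a ⬝ᵥ z.1).toNat) =
      weightSeries (fun c : Fin d → ℕ => ∑ i, c i * (a ⬝ᵥ v i).toNat) *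
        weightSeries (fun x : parPoints v => (a ⬝ᵥ x.1).toNat) := by
  have : Finite (parPoints v) := (finite_parPoints v).to_subtype
  rw [← weightSeries_prod (finite_fiber_linear (hpos.toNat_dotProduct_generator_ne_zero hv))
    fun _ => Subtype.finite]
  exact weightSeries_congr (parPointsEquiv hv) fun ⟨c, x⟩ =>
    toNat_dotProduct_add_sum_nsmul (fun i => (hpos.dotProduct_generator_pos hv i).le)
      (hpos.dotProduct_nonneg (parPoints_subset_latticeCone x.2)) c

end SimplicialCone

/-- Let `σ ⊆ ℝ^d` be a full-dimensional simplicial cone with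
integral generators `v_1,…,v_d` and let `deg : ℤ^d → ℤ`, `deg z = ∑ aᵢzᵢ`, be
a grading positive on `σ \ {0}`. With `g_i = deg v_i`,
`E = ℤ^d ∩ par(v_1,…,v_d)` and `h_j = |{x ∈ E : deg x = j}|`, the Hilbert
series of `σ` satisfies
`(∑_k |{x ∈ ℤ^d ∩ σ : deg x = k}| t^k) ⬝ ∏ᵢ(1 − t^{gᵢ}) = ∑_j h_j t^j`
as formal power series. -/
theorem hilbert_series_of_simplicial_cone {d : ℕ}
    (v : Fin d → (Fin d → ℤ))
    (hv : LinearIndependent ℝ (fun i => (fun j => (v i j : ℝ))))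
    (a : Fin d → ℤ)
    (hpos : ∀ y ∈ coneFin (fun i => (fun j => (v i j : ℝ))),
      y ≠ 0 → 0 < ∑ i, (a i : ℝ) * y i) :
    (PowerSeries.mk fun k =>
        (({z : Fin d → ℤ |
            (fun j => (z j : ℝ)) ∈ coneFin (fun i => (fun j => (v i j : ℝ))) ∧
            ∑ i, a i * z i = (k : ℤ)}).ncard : ℤ)) *
      ∏ i : Fin d, (1 - (PowerSeries.X : PowerSeries ℤ) ^ (∑ j, a j * v i j).toNat) =
    PowerSeries.mk fun k =>
      (({x ∈ parPoints v | ∑ i, a i * x i = (k : ℤ)}).ncard : ℤ) := by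
  open PowerSeries SimplicialCone in
  have hcone (z : Fin d → ℤ) (hz : z ∈ latticeCone v) : 0 ≤ a ⬝ᵥ z :=
    IsGrading.dotProduct_nonneg hpos hz
  show mk (fun k => (({z ∈ latticeCone v | a ⬝ᵥ z = k}).ncard : ℤ)) *
      ∏ i, (1 - X ^ (a ⬝ᵥ v i).toNat) = mk fun k => (({x ∈ parPoints v | a ⬝ᵥ x = k}).ncard : ℤ)
  rw [mk_ncard_sep_eq_weightSeries hcone,
    mk_ncard_sep_eq_weightSeries fun x hx => hcone x (parPoints_subset_latticeCone hx),
    weightSeries_latticeCone hv hpos, mul_right_comm,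
    weightSeries_linear_mul_prod_one_sub_X_pow
      (IsGrading.toNat_dotProduct_generator_ne_zero hpos hv), one_mul]
end

section
/- Let σ ⊆ ℝ^d be a full-dimensional simplicial cone with integral generators v_1,...,v_d, deg a grading positive on σ \ {0} with g_i = deg(v_i), and S a union of facets of σ. For x ∈ E = ℤ^d ∩ par(v_1,...,v_d) with x = Σ q_i v_i, define ε(x) as the sum of all v_i such that q_i = 0 and the facet of σ opposite v_i belongs to S. Then the Hilbert series of the semi-open cone σ \ S is H_{σ∖S}(t) = (Σ_{x∈E} t^{deg ε(x) + deg x}) / ((1−t^{g_1})···(1−t^{g_d})). -/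
open Finset

/-!
Write `r(z)` for the coordinates of a lattice point `z` in the basis `v`. Every `z ∈ ℤ^d ∩ σ` is
uniquely `x + ∑ nᵢ vᵢ` with `x ∈ E` and `nᵢ = ⌊rᵢ(z)⌋ ∈ ℕ`, and `z ∉ S` exactly when `nᵢ ≥ 1` for
each `i ∈ K` with `rᵢ(x) = 0`. So `(x, c) ↦ ε(x) + x + ∑ cᵢ vᵢ` is a degree-additive bijection
from `E × ℕ^d` onto the lattice points of `σ \ S`, and the Hilbert series of `σ \ S` is
`∑_{x ∈ E} t^{deg (ε(x) + x)}` times the Hilbert series `∏ᵢ 1 / (1 - t^{gᵢ})` of `ℕ^d`.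
-/

open PowerSeries

/-- The Hilbert series of `A` graded by `deg`. Elements of negative degree are not counted, and an
infinite graded piece contributes `0` (the junk value of `Set.ncard`). -/
noncomputable def gradedSeries {α : Type*} (A : Set α) (deg : α → ℤ) : PowerSeries ℤ :=
  PowerSeries.mk fun k => ({x | x ∈ A ∧ deg x = k}.ncard : ℤ)

section GradedSeries

variable {α β : Type*}

@[simp]
theorem coeff_gradedSeries (A : Set α) (deg : α → ℤ) (k : ℕ) :
    coeff k (gradedSeries A deg) = ({x | x ∈ A ∧ deg x = k}.ncard : ℤ) :=
  coeff_mk _ _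

theorem gradedSeries_eq_of_bijOn {A : Set α} {B : Set β} {f : α → β} {degA : α → ℤ}
    {degB : β → ℤ} (hf : Set.BijOn f A B) (hdeg : ∀ x ∈ A, degB (f x) = degA x) :
    gradedSeries B degB = gradedSeries A degA := by
  ext k
  have hfiber : {y | y ∈ B ∧ degB y = k} = f '' {x | x ∈ A ∧ degA x = k} := by
    rw [← hf.image_eq]
    ext y
    constructor
    · rintro ⟨⟨x, hx, rfl⟩, hy⟩
      exact ⟨x, ⟨hx, hdeg x hx ▸ hy⟩, rfl⟩
    · rintro ⟨x, ⟨hx, hxk⟩, rfl⟩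
      exact ⟨Set.mem_image_of_mem f hx, (hdeg x hx).trans hxk⟩
  rw [coeff_gradedSeries, coeff_gradedSeries, hfiber,
    (hf.injOn.mono fun x hx => hx.1).ncard_image]

theorem gradedSeries_prod {A : Set α} {B : Set β} {f : α → ℤ} {g : β → ℤ}
    (hfA : ∀ x ∈ A, 0 ≤ f x) (hgB : ∀ y ∈ B, 0 ≤ g y)
    (hA : ∀ k : ℕ, {x | x ∈ A ∧ f x = k}.Finite) (hB : ∀ k : ℕ, {y | y ∈ B ∧ g y = k}.Finite) :
    gradedSeries (A ×ˢ B) (fun p => f p.1 + g p.2) = gradedSeries A f * gradedSeries B g := by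
  classical
  ext k
  -- a pair of total degree `k` splits the degree as `i + j = k` with `i, j ≥ 0`
  have hfiber : {p : α × β | p ∈ A ×ˢ B ∧ f p.1 + g p.2 = k} =
      ↑((antidiagonal k).biUnion fun ij => (hA ij.1).toFinset ×ˢ (hB ij.2).toFinset) := by
    ext ⟨x, y⟩
    simp only [Set.mem_ofPred_eq, Set.mem_prod, coe_biUnion, mem_coe, mem_product,
      Set.Finite.mem_toFinset, HasAntidiagonal.mem_antidiagonal, Set.mem_iUnion, exists_prop,
      Prod.exists]
    constructor
    · rintro ⟨⟨hx, hy⟩, hk⟩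
      have hfx := Int.toNat_of_nonneg (hfA x hx)
      have hgy := Int.toNat_of_nonneg (hgB y hy)
      exact ⟨(f x).toNat, (g y).toNat, by omega, ⟨hx, hfx.symm⟩, ⟨hy, hgy.symm⟩⟩
    · rintro ⟨i, j, hij, ⟨hx, hi⟩, ⟨hy, hj⟩⟩
      exact ⟨⟨hx, hy⟩, by rw [hi, hj, ← hij]; push_cast; rfl⟩
  have hdisj : (↑(antidiagonal k) : Set (ℕ × ℕ)).PairwiseDisjoint
      fun ij => (hA ij.1).toFinset ×ˢ (hB ij.2).toFinset := by
    rintro ⟨i, j⟩ hij ⟨i', j'⟩ hij' hne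
    refine disjoint_left.mpr fun ⟨x, y⟩ hxy hxy' => hne ?_
    simp only [mem_product, Set.Finite.mem_toFinset, Set.mem_ofPred_eq] at hxy hxy'
    simp only [mem_coe, HasAntidiagonal.mem_antidiagonal] at hij hij'
    have : i = i' := by exact_mod_cast hxy.1.2.symm.trans hxy'.1.2
    ext <;> simp only <;> omega
  rw [coeff_gradedSeries, coeff_mul, hfiber, Set.ncard_coe_finset, card_biUnion hdisj]
  push_cast
  refine sum_congr rfl fun ij _ => ?_
  rw [card_product, coeff_gradedSeries, coeff_gradedSeries,
    Set.ncard_eq_toFinset_card _ (hA ij.1), Set.ncard_eq_toFinset_card _ (hB ij.2)]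
  push_cast
  rfl

end GradedSeries

theorem gradedSeries_nat_mul (g : ℕ) (hg : g ≠ 0) :
    gradedSeries (Set.univ : Set ℕ) (fun m => (m : ℤ) * g) = expand g hg (mk 1) := by
  ext k
  rw [coeff_gradedSeries, coeff_expand]
  split_ifs with hk
  · obtain ⟨m, rfl⟩ := hk
    have hfiber : {x : ℕ | x ∈ Set.univ ∧ (x : ℤ) * g = ↑(g * m)} = {m} := by
      ext x
      simp only [Set.mem_univ, true_and, Set.mem_ofPred_eq, Set.mem_singleton_iff]
      norm_cast
      rw [mul_comm, Nat.mul_right_inj hg]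
    rw [hfiber, Set.ncard_singleton, Nat.mul_div_cancel_left m (Nat.pos_of_ne_zero hg)]
    simp
  · have hfiber : {x : ℕ | x ∈ Set.univ ∧ (x : ℤ) * g = k} = ∅ := by
      ext x
      simp only [Set.mem_univ, true_and, Set.mem_ofPred_eq, Set.mem_empty_iff_false, iff_false]
      norm_cast
      exact fun h => hk ⟨x, by rw [← h, mul_comm]⟩
    rw [hfiber, Set.ncard_empty, Nat.cast_zero]

theorem expand_mk_one_mul_one_sub_X_pow (g : ℕ) (hg : g ≠ 0) :
    expand g hg (mk 1 : PowerSeries ℤ) * (1 - X ^ g) = 1 := by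
  simpa [expand_X] using congrArg (expand g hg) (mk_one_mul_one_sub_eq_one ℤ)

theorem finite_setOf_sum_mul_eq {ι : Type*} [Fintype ι] (g : ι → ℕ) (hg : ∀ i, g i ≠ 0)
    (k : ℤ) : {c : ι → ℕ | ∑ i, (c i : ℤ) * g i = k}.Finite := by
  refine (Set.Finite.pi fun _ => Set.finite_Iic k.toNat).subset fun c (hc : _ = k) i _ => ?_
  have hle : (c i : ℤ) * g i ≤ ∑ j, (c j : ℤ) * g j :=
    single_le_sum (f := fun j => (c j : ℤ) * g j) (fun j _ => by positivity) (mem_univ i)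
  have hgi : (1 : ℤ) ≤ g i := by exact_mod_cast Nat.one_le_iff_ne_zero.mpr (hg i)
  have : (c i : ℤ) ≤ (c i : ℤ) * g i := le_mul_of_one_le_right (by positivity) hgi
  simp only [Set.mem_Iic]
  omega

theorem gradedSeries_pi_nat {n : ℕ} (g : Fin n → ℕ) (hg : ∀ i, g i ≠ 0) :
    gradedSeries (Set.univ : Set (Fin n → ℕ)) (fun c => ∑ i, (c i : ℤ) * g i) =
      ∏ i, expand (g i) (hg i) (mk 1) := by
  induction n with
  | zero =>
    ext (_ | k)
    · simp [Set.ncard_univ]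
    · simp [(Nat.cast_add_one_ne_zero k).symm]
  | succ n ih =>
    have hcons : Set.BijOn (Fin.consEquiv fun _ : Fin (n + 1) => ℕ) (Set.univ ×ˢ Set.univ)
        Set.univ := by
      rw [Set.univ_prod_univ]
      exact (Fin.consEquiv _).bijective.bijOn_univ
    have hfin₀ (k : ℕ) : {m : ℕ | m ∈ Set.univ ∧ (m : ℤ) * g 0 = k}.Finite := by
      refine (Set.finite_Iic k).subset fun m ⟨_, hm⟩ => ?_
      have hm : m * g 0 = k := by exact_mod_cast hm
      exact hm ▸ Nat.le_mul_of_pos_right m (Nat.pos_of_ne_zero (hg 0))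
    have hfin (k : ℕ) : {c : Fin n → ℕ | c ∈ Set.univ ∧ ∑ i, (c i : ℤ) * g i.succ = k}.Finite :=
      (finite_setOf_sum_mul_eq (fun i : Fin n => g i.succ) (fun i => hg i.succ) k).subset
        fun c hc => hc.2
    rw [gradedSeries_eq_of_bijOn hcons (degA := fun p => (p.1 : ℤ) * g 0 +
        ∑ i, (p.2 i : ℤ) * g i.succ) fun p _ => by simp [Fin.sum_univ_succ, Fin.consEquiv],
      gradedSeries_prod (fun _ _ => by positivity) (fun _ _ => by positivity) hfin₀ hfin,
      gradedSeries_nat_mul, ih, Fin.prod_univ_succ]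

section Cone

variable {d n : ℕ}

theorem mem_coneFin_self (w : Fin n → E d) (i : Fin n) : w i ∈ coneFin w := by
  classical
  refine ⟨Pi.single i 1, fun j => ?_, by simp [Pi.single_apply]⟩
  by_cases h : j = i <;> simp [h]

theorem mem_coneFin_iff (b : Module.Basis (Fin n) ℝ (E d)) {y : E d} :
    y ∈ coneFin ⇑b ↔ ∀ i, 0 ≤ b.repr y i := by
  constructor
  · rintro ⟨c, hc, rfl⟩
    rwa [b.repr_sum_self]
  · exact fun h => ⟨_, h, (b.sum_repr y).symm⟩

theorem mem_coneOf_image_ne_iff (b : Module.Basis (Fin n) ℝ (E d)) (i : Fin n) {y : E d} :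
    y ∈ coneOf (⇑b '' {j | j ≠ i}) ↔ (∀ j, 0 ≤ b.repr y j) ∧ b.repr y i = 0 := by
  classical
  constructor
  · rintro ⟨t, c, hts, hc, rfl⟩
    obtain ⟨s, hs, rfl⟩ := subset_set_image_iff.mp hts
    have hsum : ∑ u ∈ s.image b, c u • u = ∑ j, (if j ∈ s then c (b j) else 0) • b j := by
      simp only [sum_image b.injective.injOn, ite_smul, zero_smul, sum_ite_mem, univ_inter]
    rw [hsum, b.repr_sum_self]
    exact ⟨fun j => by split_ifs <;> simp [hc], if_neg fun hi => hs hi rfl⟩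
  · rintro ⟨hy, hyi⟩
    have : Nonempty (Fin n) := ⟨i⟩
    refine ⟨(univ.erase i).image b, fun u => b.repr y (Function.invFun b u), ?_, fun _ => hy _, ?_⟩
    · simp only [coe_image, coe_erase, coe_univ]
      exact Set.image_mono fun j hj => hj.2
    · simp only [sum_image b.injective.injOn, Function.leftInverse_invFun b.injective _]
      rw [sum_erase _ (by rw [hyi, zero_smul])]
      exact (b.sum_repr y).symm

theorem mem_coneFin_diff_iUnion_coneOf_iff (b : Module.Basis (Fin n) ℝ (E d))
    (K : Finset (Fin n)) {y : E d} :
    y ∈ coneFin ⇑b \ ⋃ i ∈ K, coneOf (⇑b '' {j | j ≠ i}) ↔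
      ∀ i, 0 ≤ b.repr y i ∧ (i ∈ K → b.repr y i ≠ 0) := by
  simp only [Set.mem_sdiff, mem_coneFin_iff, Set.mem_iUnion, mem_coneOf_image_ne_iff,
    exists_prop, not_exists, not_and]
  exact ⟨fun ⟨hy, hK⟩ i => ⟨hy i, fun hi => hK i hi hy⟩,
    fun h => ⟨fun i => (h i).1, fun i hi _ => (h i).2 hi⟩⟩

end Cone

def intVec (d : ℕ) : (Fin d → ℤ) →+ E d := (Int.castAddHom ℝ).compLeft (Fin d)

theorem intVec_injective (d : ℕ) : Function.Injective (intVec d) :=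
  Int.cast_injective.comp_left

theorem parPoints_finite {d : ℕ} (v : Fin d → Fin d → ℤ) : (parPoints v).Finite := by
  refine (Set.Finite.pi fun j => Set.finite_Icc (-∑ i, |v i j|) (∑ i, |v i j|)).subset ?_
  rintro x ⟨q, hq, hx⟩ j -
  have hxj : (x j : ℝ) = ∑ i, q i * v i j := by simpa using congrFun hx j
  have hbound : |(x j : ℝ)| ≤ ∑ i, |(v i j : ℝ)| := by
    rw [hxj]
    refine (abs_sum_le_sum_abs _ _).trans (sum_le_sum fun i _ => ?_)
    rw [abs_mul, abs_of_nonneg (hq i).1]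
    exact mul_le_of_le_one_left (abs_nonneg _) (hq i).2.le
  rw [Set.mem_Icc, ← abs_le]
  exact_mod_cast hbound

/-- The paper's `ε(x)`, where `K` indexes the facets (opposite `v i`) that make up `S`. -/
noncomputable def facetShift {d : ℕ} (b : Module.Basis (Fin d) ℝ (E d)) (v : Fin d → Fin d → ℤ)
    (K : Finset (Fin d)) (x : Fin d → ℤ) : Fin d → ℤ :=
  ∑ i ∈ K with b.repr (intVec d x) i = 0, v i

noncomputable def toSemiopen {d : ℕ} (b : Module.Basis (Fin d) ℝ (E d)) (v : Fin d → Fin d → ℤ)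
    (K : Finset (Fin d)) (p : (Fin d → ℤ) × (Fin d → ℕ)) : Fin d → ℤ :=
  facetShift b v K p.1 + p.1 + ∑ i, (p.2 i : ℤ) • v i

section Lattice

variable {d : ℕ} {b : Module.Basis (Fin d) ℝ (E d)} {v : Fin d → Fin d → ℤ} {K : Finset (Fin d)}

theorem repr_intVec_add_sum_smul (hb : ∀ i, b i = intVec d (v i)) (x m : Fin d → ℤ) (j : Fin d) :
    b.repr (intVec d (x + ∑ i, m i • v i)) j = b.repr (intVec d x) j + m j := by
  have : intVec d (∑ i, m i • v i) = ∑ i, (m i : ℝ) • b i := by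
    simp only [map_sum, map_zsmul, hb, Int.cast_smul_eq_zsmul]
  rw [map_add, this, map_add, Finsupp.add_apply, b.repr_sum_self]

theorem repr_intVec_eq_of_eq_sum (hb : ∀ i, b i = intVec d (v i)) {x : Fin d → ℤ}
    {q : Fin d → ℝ} (hx : intVec d x = ∑ i, q i • intVec d (v i)) :
    ⇑(b.repr (intVec d x)) = q := by
  simp only [← hb] at hx
  rw [hx, b.repr_sum_self]

theorem mem_parPoints_iff (hb : ∀ i, b i = intVec d (v i)) {x : Fin d → ℤ} :
    x ∈ parPoints v ↔ ∀ i, 0 ≤ b.repr (intVec d x) i ∧ b.repr (intVec d x) i < 1 := by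
  constructor
  · rintro ⟨q, hq, hx⟩
    rwa [repr_intVec_eq_of_eq_sum hb hx]
  · refine fun h => ⟨_, h, ?_⟩
    change intVec d x = ∑ i, _ • intVec d (v i)
    simp only [← hb]
    exact (b.sum_repr _).symm

theorem toSemiopen_eq (x : Fin d → ℤ) (c : Fin d → ℕ) :
    toSemiopen b v K (x, c) =
      x + ∑ i, ((if i ∈ K ∧ b.repr (intVec d x) i = 0 then 1 else 0) + (c i : ℤ)) • v i := by
  simp only [toSemiopen, facetShift, add_smul, ite_smul, one_smul, zero_smul, sum_add_distrib,
    ← sum_filter, ← filter_filter, filter_mem_eq_inter, univ_inter]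
  abel

theorem repr_toSemiopen (hb : ∀ i, b i = intVec d (v i)) (x : Fin d → ℤ) (c : Fin d → ℕ)
    (j : Fin d) :
    b.repr (intVec d (toSemiopen b v K (x, c))) j = b.repr (intVec d x) j +
      (((if j ∈ K ∧ b.repr (intVec d x) j = 0 then 1 else 0) + (c j : ℤ) : ℤ) : ℝ) := by
  rw [toSemiopen_eq, repr_intVec_add_sum_smul hb]

theorem mapsTo_toSemiopen (hb : ∀ i, b i = intVec d (v i)) :
    Set.MapsTo (toSemiopen b v K) (parPoints v ×ˢ Set.univ)
      {z | ∀ i, 0 ≤ b.repr (intVec d z) i ∧ (i ∈ K → b.repr (intVec d z) i ≠ 0)} := by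
  rintro ⟨x, c⟩ ⟨hx, -⟩ i
  obtain ⟨hx₀, -⟩ := (mem_parPoints_iff hb).mp hx i
  simp only [repr_toSemiopen hb]
  split_ifs with hi
  · push_cast
    exact ⟨by positivity, fun _ => by positivity⟩
  · refine ⟨by positivity, fun hiK => ?_⟩
    have : 0 < b.repr (intVec d x) i := lt_of_le_of_ne hx₀ (Ne.symm fun h => hi ⟨hiK, h⟩)
    push_cast
    positivity

theorem injOn_toSemiopen (hb : ∀ i, b i = intVec d (v i)) :
    Set.InjOn (toSemiopen b v K) (parPoints v ×ˢ Set.univ) := by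
  rintro ⟨x, c⟩ ⟨hx, -⟩ ⟨x', c'⟩ ⟨hx', -⟩ h
  have hrepr (j : Fin d) := congrArg (fun z => b.repr (intVec d z) j) h
  simp only [repr_toSemiopen hb] at hrepr
  -- the coordinates of `x` are the fractional parts of those of `toSemiopen (x, c)`
  have hfract {x : Fin d → ℤ} (hx : x ∈ parPoints v) (m : ℤ) (j : Fin d) :
      Int.fract (b.repr (intVec d x) j + m) = b.repr (intVec d x) j := by
    rw [Int.fract_add_intCast, Int.fract_eq_self]
    exact (mem_parPoints_iff hb).mp hx j
  have hxx : intVec d x = intVec d x' := b.repr.injective <| Finsupp.ext fun j => by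
    simpa only [hfract hx, hfract hx'] using congrArg Int.fract (hrepr j)
  obtain rfl : x = x' := intVec_injective d hxx
  refine Prod.ext rfl (funext fun j => ?_)
  simpa using hrepr j

theorem surjOn_toSemiopen (hb : ∀ i, b i = intVec d (v i)) :
    Set.SurjOn (toSemiopen b v K) (parPoints v ×ˢ Set.univ)
      {z | ∀ i, 0 ≤ b.repr (intVec d z) i ∧ (i ∈ K → b.repr (intVec d z) i ≠ 0)} := by
  intro z hz
  set r := b.repr (intVec d z)
  set x := z - ∑ i, ⌊r i⌋ • v i
  have hrx (j : Fin d) : b.repr (intVec d x) j = Int.fract (r j) := by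
    have := repr_intVec_add_sum_smul hb x (fun i => ⌊r i⌋) j
    rw [sub_add_cancel] at this
    rw [Int.fract]
    linarith
  have hx : x ∈ parPoints v := (mem_parPoints_iff hb).mpr fun j => by
    rw [hrx]
    exact ⟨Int.fract_nonneg _, Int.fract_lt_one _⟩
  set e : Fin d → ℤ := fun j => if j ∈ K ∧ b.repr (intVec d x) j = 0 then 1 else 0
  -- on a facet in `K` the coordinate is a positive integer, so its floor is at least `1`
  have he (j : Fin d) : e j ≤ ⌊r j⌋ := by
    have hfloor : 0 ≤ ⌊r j⌋ := Int.floor_nonneg.mpr (hz j).1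
    by_cases hj : j ∈ K ∧ b.repr (intVec d x) j = 0
    · have hr : r j = ⌊r j⌋ := by
        rw [hrx, Int.fract, sub_eq_zero] at hj
        exact hj.2
      have : ⌊r j⌋ ≠ 0 := fun h0 => (hz j).2 hj.1 (by rw [hr, h0, Int.cast_zero])
      simp only [e, if_pos hj]
      omega
    · simpa only [e, if_neg hj] using hfloor
  refine ⟨(x, fun j => (⌊r j⌋ - e j).toNat), ⟨hx, trivial⟩, ?_⟩
  have hcoeff : ∑ j, (e j + ((⌊r j⌋ - e j).toNat : ℤ)) • v j = ∑ j, ⌊r j⌋ • v j :=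
    sum_congr rfl fun j _ => by rw [Int.toNat_of_nonneg (sub_nonneg.mpr (he j)), add_sub_cancel]
  rw [toSemiopen_eq]
  exact (congrArg (x + ·) hcoeff).trans (sub_add_cancel _ _)

theorem bijOn_toSemiopen (hb : ∀ i, b i = intVec d (v i)) :
    Set.BijOn (toSemiopen b v K) (parPoints v ×ˢ Set.univ)
      {z | ∀ i, 0 ≤ b.repr (intVec d z) i ∧ (i ∈ K → b.repr (intVec d z) i ≠ 0)} :=
  ⟨mapsTo_toSemiopen hb, injOn_toSemiopen hb, surjOn_toSemiopen hb⟩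

end Lattice

theorem dotProduct_pos_of_mem_coneFin {d n : ℕ} {a : Fin d → ℤ} {w : Fin n → E d}
    (hpos : ∀ y ∈ coneFin w, y ≠ 0 → 0 < ∑ i, (a i : ℝ) * y i) {z : Fin d → ℤ}
    (hz : intVec d z ∈ coneFin w) (hz₀ : z ≠ 0) : 0 < a ⬝ᵥ z := by
  have := hpos _ hz ((map_ne_zero_iff _ (intVec_injective d)).mpr hz₀)
  have hcast : ∑ i, (a i : ℝ) * intVec d z i = ((a ⬝ᵥ z : ℤ) : ℝ) := by
    simp [dotProduct, intVec]
  exact_mod_cast hcast ▸ this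

theorem dotProduct_nonneg_of_mem_coneFin {d n : ℕ} {a : Fin d → ℤ} {w : Fin n → E d}
    (hpos : ∀ y ∈ coneFin w, y ≠ 0 → 0 < ∑ i, (a i : ℝ) * y i) {z : Fin d → ℤ}
    (hz : intVec d z ∈ coneFin w) : 0 ≤ a ⬝ᵥ z := by
  rcases eq_or_ne z 0 with rfl | hz₀
  · simp
  · exact (dotProduct_pos_of_mem_coneFin hpos hz hz₀).le


open Classical in
/-- Let `σ ⊆ ℝ^d` be a full-dimensional simplicial cone with
integral generators `v_1,…,v_d`, `deg` a grading positive on `σ \ {0}` with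
`g_i = deg v_i`, and `S` a union of facets of `σ` (those opposite `v_i` for
`i ∈ K`). For `x ∈ E = ℤ^d ∩ par(v_1,…,v_d)` with `x = ∑ qᵢvᵢ`, let `ε(x)` be
the sum of all `v_i` such that `q_i = 0` and the facet opposite `v_i` belongs
to `S`. Then the Hilbert series of the semi-open cone `σ \ S` is
`H_{σ∖S}(t) = (∑_{x∈E} t^{deg ε(x) + deg x}) / ∏ᵢ(1 − t^{gᵢ})`. -/
theorem hilbert_series_of_semiopen_simplicial_cone {d : ℕ}
    (v : Fin d → (Fin d → ℤ))
    (hv : LinearIndependent ℝ (fun i => (fun j => (v i j : ℝ))))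
    (a : Fin d → ℤ)
    (hpos : ∀ y ∈ coneFin (fun i => (fun j => (v i j : ℝ))),
      y ≠ 0 → 0 < ∑ i, (a i : ℝ) * y i)
    (K : Finset (Fin d))
    (S : Set (E d))
    (hS : S = ⋃ i ∈ K, coneOf ((fun i => (fun j => (v i j : ℝ))) '' {j | j ≠ i}))
    (q : (Fin d → ℤ) → (Fin d → ℝ))
    (hq : ∀ x ∈ parPoints v,
      (fun j => (x j : ℝ)) = ∑ i, q x i • (fun j => (v i j : ℝ)))
    (ε : (Fin d → ℤ) → (Fin d → ℤ))
    (hε : ∀ x, ε x = ∑ i ∈ K.filter (fun i => q x i = 0), v i) :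
    (PowerSeries.mk fun k =>
        (({z : Fin d → ℤ |
            (fun j => (z j : ℝ)) ∈
              coneFin (fun i => (fun j => (v i j : ℝ))) \ S ∧
            ∑ i, a i * z i = (k : ℤ)}).ncard : ℤ)) *
      ∏ i : Fin d, (1 - (PowerSeries.X : PowerSeries ℤ) ^ (∑ j, a j * v i j).toNat) =
    PowerSeries.mk fun k =>
      (({x ∈ parPoints v | ∑ i, a i * (ε x i + x i) = (k : ℤ)}).ncard : ℤ) := by
  let b := basisOfLinearIndependentOfCardEqFinrank' _ hv (by simp)
  have hbv : ⇑b = fun i j => (v i j : ℝ) := coe_basisOfLinearIndependentOfCardEqFinrank' ..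
  have hb (i : Fin d) : b i = intVec d (v i) := congrFun hbv i
  have hg (i : Fin d) : 0 < a ⬝ᵥ v i := dotProduct_pos_of_mem_coneFin hpos
    (mem_coneFin_self _ i) fun h => hv.ne_zero i (by ext; simp [h])
  have hg' (i : Fin d) : (a ⬝ᵥ v i).toNat ≠ 0 := by have := hg i; omega
  have hcone : {z | intVec d z ∈ coneFin (fun i j => (v i j : ℝ)) \ S} =
      {z | ∀ i, 0 ≤ b.repr (intVec d z) i ∧ (i ∈ K → b.repr (intVec d z) i ≠ 0)} := by
    ext z
    rw [Set.mem_ofPred_eq, hS, ← hbv, mem_coneFin_diff_iUnion_coneOf_iff]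
    rfl
  have hεx (x : Fin d → ℤ) (hx : x ∈ parPoints v) : ε x = facetShift b v K x := by
    rw [hε, facetShift, ← repr_intVec_eq_of_eq_sum hb (hq x hx)]
  have hdeg (p) (hp : p ∈ parPoints v ×ˢ Set.univ) : a ⬝ᵥ toSemiopen b v K p =
      a ⬝ᵥ (ε p.1 + p.1) + ∑ i, (p.2 i : ℤ) * ((a ⬝ᵥ v i).toNat : ℕ) := by
    simp only [toSemiopen, hεx p.1 hp.1, dotProduct_add, dotProduct_sum, dotProduct_smul,
      smul_eq_mul, Int.toNat_of_nonneg (hg _).le]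
  have hnonneg (x) (hx : x ∈ parPoints v) : 0 ≤ a ⬝ᵥ (ε x + x) := by
    have hmem := hcone ▸ mapsTo_toSemiopen hb (x := (x, 0)) ⟨hx, trivial⟩
    simpa [hdeg (x, 0) ⟨hx, trivial⟩] using dotProduct_nonneg_of_mem_coneFin hpos hmem.1
  change gradedSeries {z | intVec d z ∈ coneFin (fun i j => (v i j : ℝ)) \ S} (a ⬝ᵥ ·) *
      ∏ i, (1 - X ^ (a ⬝ᵥ v i).toNat) =
    gradedSeries (parPoints v) fun x => a ⬝ᵥ (ε x + x)
  rw [hcone, gradedSeries_eq_of_bijOn (bijOn_toSemiopen hb) hdeg,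
    gradedSeries_prod hnonneg (fun _ _ => by positivity)
      (fun k => (parPoints_finite v).subset fun x hx => hx.1)
      (fun k => (finite_setOf_sum_mul_eq _ hg' k).subset fun c hc => hc.2),
    mul_assoc, gradedSeries_pi_nat _ hg', ← prod_mul_distrib]
  simp only [expand_mk_one_mul_one_sub_X_pow, prod_const_one, mul_one]
end

section
/- Let σ ⊆ ℝ^d be a full-dimensional simplicial cone with integral generators v_1,...,v_d, S a union of facets of σ, x ∈ ℤ^d ∩ par(v_1,...,v_d) with x = Σ q_i v_i, and ε(x) the sum of all v_i with q_i = 0 whose opposite facet lies in S. Then (x + M_σ) \ S = ε(x) + x + M_σ, where M_σ is the monoid generated by v_1,...,v_d. -/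
/-!
A point of `x + M_σ` is `∑ (q_i + c_i) v_i` with `c_i ∈ ℕ`; by linear independence these are its
unique real coordinates, and it lies on the facet opposite `v_i` exactly when `q_i + c_i = 0`,
i.e. when `q_i = 0` and `c_i = 0`. Removing `S` therefore amounts to requiring `c_i ≥ 1` for every
`i ∈ K` with `q_i = 0`, which is translation by `ε(x)`.
-/

open Finset

section Cone

variable {ι : Type*} [Fintype ι] {d : ℕ} {w : ι → E d}

theorem mem_coneOf_image_iff (hw : Function.Injective w) (s : Set ι) (y : E d) :
    y ∈ coneOf (w '' s) ↔
      ∃ b : ι → ℝ, (∀ j, 0 ≤ b j) ∧ (∀ j ∉ s, b j = 0) ∧ y = ∑ j, b j • w j := by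
  classical
  constructor
  · rintro ⟨t, c, hts, hc, rfl⟩
    let u := t.preimage w hw.injOn
    have hus : ∀ j ∈ u, j ∈ s := fun j hj => by
      obtain ⟨k, hk, hkj⟩ := hts (Finset.mem_preimage.mp hj)
      exact hw hkj ▸ hk
    refine ⟨fun j => if j ∈ u then c (w j) else 0, fun j => ite_nonneg (hc _) le_rfl,
      fun j hj => ?_, ?_⟩
    · simp [mt (hus j) hj]
    · rw [← Finset.sum_preimage w t hw.injOn (fun v => c v • v)
        fun v hv hvw => (hvw (Set.image_subset_range w s (hts hv))).elim]
      simp only [ite_smul, zero_smul, Fintype.sum_ite_mem]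
      rfl
  · rintro ⟨b, hb, hbs, rfl⟩
    refine ⟨(univ.filter (· ∈ s)).image w, Function.extend w b 0, ?_, fun v => ?_, ?_⟩
    · intro v hv
      obtain ⟨j, hj, rfl⟩ := Finset.mem_image.mp hv
      exact ⟨j, (Finset.mem_filter.mp hj).2, rfl⟩
    · by_cases hv : ∃ j, w j = v
      · obtain ⟨j, rfl⟩ := hv
        rw [hw.extend_apply]
        exact hb j
      · rw [Function.extend_apply' _ _ _ hv]
        rfl
    · rw [Finset.sum_image hw.injOn, Finset.sum_filter_of_ne]
      · simp only [hw.extend_apply]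
      · intro j _ hj
        by_contra hjs
        simp [hw.extend_apply, hbs j hjs] at hj

theorem sum_smul_mem_coneOf_image_ne_iff (hw : LinearIndependent ℝ w) (i : ι) (a : ι → ℝ) :
    ∑ j, a j • w j ∈ coneOf (w '' {j | j ≠ i}) ↔ a i = 0 ∧ ∀ j, 0 ≤ a j := by
  rw [mem_coneOf_image_iff hw.injective]
  constructor
  · rintro ⟨b, hb, hbi, hab⟩
    obtain rfl := funext (Fintype.linearIndependent_iffₛ.mp hw a b hab)
    exact ⟨hbi i (by simp), hb⟩
  · rintro ⟨hai, ha⟩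
    exact ⟨a, ha, fun j hj => by simp_all, rfl⟩

theorem sum_smul_mem_iUnion_coneOf_iff (hw : LinearIndependent ℝ w) (K : Finset ι)
    {a : ι → ℝ} (ha : ∀ j, 0 ≤ a j) :
    ∑ j, a j • w j ∈ ⋃ i ∈ K, coneOf (w '' {j | j ≠ i}) ↔ ∃ i ∈ K, a i = 0 := by
  simp only [Set.mem_iUnion, sum_smul_mem_coneOf_image_ne_iff hw, ha, implies_true, and_true,
    exists_prop]

end Cone

theorem coeff_mem_Ico_of_mem_parPoints {d : ℕ} {v : Fin d → (Fin d → ℤ)}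
    (hv : LinearIndependent ℝ (fun i => (fun j => (v i j : ℝ)))) {x : Fin d → ℤ}
    (hx : x ∈ parPoints v) {q : Fin d → ℝ}
    (hq : (fun j => (x j : ℝ)) = ∑ i, q i • (fun j => (v i j : ℝ))) (i : Fin d) :
    q i ∈ Set.Ico 0 1 := by
  obtain ⟨q', hq', hxq'⟩ := hx
  rw [Fintype.linearIndependent_iffₛ.mp hv q q' (hq.symm.trans hxq') i]
  exact hq' i

theorem intCast_add_sum_nsmul {ι : Type*} [Fintype ι] {d : ℕ} {v : ι → (Fin d → ℤ)}
    {x : Fin d → ℤ} {q : ι → ℝ} (hq : (fun j => (x j : ℝ)) = ∑ i, q i • (fun j => (v i j : ℝ)))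
    (c : ι → ℕ) :
    (fun j => ((x + ∑ i, c i • v i) j : ℝ)) = ∑ i, (q i + c i) • (fun j => (v i j : ℝ)) := by
  ext j
  have hxj := congrFun hq j
  simp only [Finset.sum_apply, Pi.smul_apply, smul_eq_mul] at hxj
  simp [Finset.sum_apply, hxj, add_mul, Finset.sum_add_distrib]

theorem exists_one_le_and_eq_sum_nsmul_iff {M ι : Type*} [AddCommMonoid M] [Fintype ι]
    [DecidableEq ι] (v : ι → M) (T : Finset ι) (m : M) :
    (∃ c : ι → ℕ, (∀ i ∈ T, 1 ≤ c i) ∧ m = ∑ i, c i • v i) ↔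
      ∃ c : ι → ℕ, m = ∑ i ∈ T, v i + ∑ i, c i • v i := by
  have hT : ∑ i ∈ T, v i = ∑ i, (if i ∈ T then 1 else 0) • v i := by
    simp only [ite_smul, one_smul, zero_smul, Fintype.sum_ite_mem]
  rw [hT]
  constructor
  · rintro ⟨c, hc, rfl⟩
    refine ⟨fun i => c i - if i ∈ T then 1 else 0, ?_⟩
    rw [← Finset.sum_add_distrib]
    refine Finset.sum_congr rfl fun i _ => ?_
    rw [← add_smul]
    by_cases hi : i ∈ T
    · simp [hi, Nat.add_sub_cancel' (hc i hi)]
    · simp [hi]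
  · rintro ⟨c, rfl⟩
    refine ⟨fun i => (if i ∈ T then 1 else 0) + c i, fun i hi => by simp [hi], ?_⟩
    simp only [add_smul, Finset.sum_add_distrib]

open Classical in
/-- Let `σ ⊆ ℝ^d` be a full-dimensional simplicial cone with
integral generators `v_1,…,v_d`, `S` a union of facets of `σ` (those opposite
`v_i` for `i ∈ K`), `x ∈ ℤ^d ∩ par(v_1,…,v_d)` with `x = ∑ qᵢvᵢ`, and `ε(x)`
the sum of all `v_i` with `q_i = 0` whose opposite facet lies in `S`.
Then `(x + M_σ) \ S = ε(x) + x + M_σ`, where `M_σ` is the monoid generated by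
`v_1,…,v_d`. -/
theorem semiopen_translate_identity {d : ℕ}
    (v : Fin d → (Fin d → ℤ))
    (hv : LinearIndependent ℝ (fun i => (fun j => (v i j : ℝ))))
    (K : Finset (Fin d))
    (S : Set (E d))
    (hS : S = ⋃ i ∈ K, coneOf ((fun i => (fun j => (v i j : ℝ))) '' {j | j ≠ i}))
    (x : Fin d → ℤ) (hx : x ∈ parPoints v)
    (q : Fin d → ℝ)
    (hq : (fun j => (x j : ℝ)) = ∑ i, q i • (fun j => (v i j : ℝ)))
    (ε : Fin d → ℤ)
    (hε : ε = ∑ i ∈ K.filter (fun i => q i = 0), v i) :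
    ∀ z : Fin d → ℤ,
      ((∃ m ∈ genMonoid v, z = x + m) ∧ (fun j => (z j : ℝ)) ∉ S) ↔
      (∃ m ∈ genMonoid v, z = ε + x + m) := by
  have hq_nonneg i : 0 ≤ q i := (coeff_mem_Ico_of_mem_parPoints hv hx hq i).1
  have hnotS : ∀ c : Fin d → ℕ, (fun j => ((x + ∑ i, c i • v i) j : ℝ)) ∉ S ↔
      ∀ i ∈ K.filter (fun i => q i = 0), 1 ≤ c i := by
    intro c
    rw [intCast_add_sum_nsmul hq, hS, sum_smul_mem_iUnion_coneOf_iff hv K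
      fun i => add_nonneg (hq_nonneg i) (c i).cast_nonneg]
    simp [add_eq_zero_iff_of_nonneg (hq_nonneg _), Nat.one_le_iff_ne_zero]
  intro z
  simp only [genMonoid, natCast_zsmul]
  constructor
  · rintro ⟨⟨_, ⟨c, rfl⟩, rfl⟩, hzS⟩
    obtain ⟨c', hc'⟩ := (exists_one_le_and_eq_sum_nsmul_iff v _ _).1 ⟨c, (hnotS c).1 hzS, rfl⟩
    exact ⟨_, ⟨c', rfl⟩, by rw [hc', hε]; abel⟩
  · rintro ⟨_, ⟨c', rfl⟩, rfl⟩
    obtain ⟨c, hc1, hc⟩ :=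
      (exists_one_le_and_eq_sum_nsmul_iff v (K.filter fun i => q i = 0) _).2 ⟨c', rfl⟩
    have hz : ε + x + ∑ i, c' i • v i = x + ∑ i, c i • v i := by rw [← hc, hε]; abel
    exact ⟨⟨_, ⟨c, rfl⟩, hz⟩, hz ▸ (hnotS c).2 hc1⟩
end

section
/- Let C = cone(x_1,...,x_n) ⊆ ℝ^d. Every face F of cone(x_1,...,x_{n−1}) that is visible from x_n satisfies: for the new cone cone(F, x_n), the apex ray structure holds, i.e., cone(F, x_n) ∩ cone(x_1,...,x_{n−1}) = F. In particular, distinct visible facets F, F′ of cone(x_1,...,x_{n−1}) give pyramids cone(F, x_n) and cone(F′, x_n) whose intersection is contained in cone(F ∩ F′, x_n). -/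
open Finset

/-!
If a point `y + t • x` with `y ∈ F` and `t > 0` lay in `D`, then rescaling it by `(1 + t)⁻¹`
would give a point of `D` on the segment `[x, y]` other than `y` (unless `x = y ∈ D`),
contradicting visibility. Hence `cone(F, x) ∩ D = F`. For two pyramids, a common point
`y + t • x = y' + t' • x` with `t ≤ t'` gives `y = y' + (t' - t) • x ∈ cone(F', x) ∩ D = F'`.
-/

theorem IsFace.subset {d : ℕ} {C F : Set (E d)} (h : IsFace C F) : F ⊆ C := by
  rcases h with rfl | ⟨μ, -, rfl⟩
  · exact subset_rfl
  · exact Set.inter_subset_left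

theorem smul_mem_coneFin {d n : ℕ} {x : Fin n → E d} {y : E d} (hy : y ∈ coneFin x)
    {s : ℝ} (hs : 0 ≤ s) : s • y ∈ coneFin x := by
  obtain ⟨c, hc, rfl⟩ := hy
  refine ⟨fun i => s * c i, fun i => mul_nonneg hs (hc i), ?_⟩
  simp only [Finset.smul_sum, mul_smul]

theorem inv_one_add_smul_add_smul_mem_segment {d : ℕ} (x y : E d) {t : ℝ} (ht : 0 ≤ t) :
    (1 + t)⁻¹ • (y + t • x) ∈ segment ℝ x y := by
  have h1t : 0 < 1 + t := by linarith
  refine ⟨t / (1 + t), (1 + t)⁻¹, by positivity, by positivity, by field_simp; ring, ?_⟩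
  rw [smul_add, smul_smul, add_comm, div_eq_inv_mul]

theorem VisibleFrom.addRay_inter_eq {d : ℕ} {D F : Set (E d)} {x : E d}
    (hD : ∀ z ∈ D, ∀ s : ℝ, 0 ≤ s → s • z ∈ D) (hFD : F ⊆ D) (hvis : VisibleFrom D x F) :
    addRay F x ∩ D = F := by
  refine subset_antisymm ?_ fun y hy => ⟨⟨y, hy, 0, le_rfl, by simp⟩, hFD hy⟩
  rintro _ ⟨⟨y, hy, t, ht, rfl⟩, hzD⟩
  obtain rfl | ht := ht.eq_or_lt
  · simpa using hy
  have h1t : (1 + t) ≠ 0 := by positivity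
  have hy_eq : (1 + t)⁻¹ • (y + t • x) = y :=
    hvis.2 y hy _ (inv_one_add_smul_add_smul_mem_segment x y ht.le) (hD _ hzD _ (by positivity))
  have hxy : t • x = t • y := by
    have := congrArg ((1 + t) • ·) hy_eq
    simp only [smul_inv_smul₀ h1t, add_smul, one_smul] at this
    exact add_left_cancel this
  exact absurd (smul_right_injective _ ht.ne' hxy ▸ hFD hy) hvis.1

theorem addRay_inter_addRay_subset {d : ℕ} {D F F' : Set (E d)} {x : E d}
    (hF : addRay F x ∩ D = F) (hF' : addRay F' x ∩ D = F') :
    addRay F x ∩ addRay F' x ⊆ addRay (F ∩ F') x := by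
  rintro _ ⟨⟨y, hy, t, ht, rfl⟩, ⟨y', hy', t', ht', heq⟩⟩
  wlog htt : t ≤ t' generalizing F F' y y' t t'
  · rw [heq, Set.inter_comm]
    exact this hF' hF y' hy' t' ht' y hy t ht heq.symm (le_of_not_ge htt)
  have hy_eq : y = y' + (t' - t) • x := by
    rw [sub_smul, ← add_sub_assoc, ← heq, add_sub_cancel_right]
  have hyF' : y ∈ F' := by
    rw [← hF']
    have hyD : y ∈ D := (hF.symm.subset hy).2
    exact ⟨⟨y', hy', t' - t, sub_nonneg.2 htt, hy_eq⟩, hyD⟩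
  exact ⟨y, ⟨hy, hyF'⟩, t, ht, rfl⟩

/-- Let `C = cone(x_1,…,x_n) ⊆ ℝ^d` and
`D = cone(x_1,…,x_{n−1})`. Every face `F` of `D` visible from `x_n` satisfies
`cone(F, x_n) ∩ D = F`; in particular, distinct visible facets `F, F′` of `D`
give pyramids `cone(F, x_n)`, `cone(F′, x_n)` whose intersection is contained
in `cone(F ∩ F′, x_n)`. -/
theorem pyramid_apex_ray_structure {d n : ℕ} (x : Fin (n + 1) → E d)
    (D : Set (E d)) (hD : D = coneFin (fun i : Fin n => x i.castSucc)) :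
    (∀ F, IsFace D F → VisibleFrom D (x (Fin.last n)) F →
      addRay F (x (Fin.last n)) ∩ D = F) ∧
    (∀ F F', IsFace D F → setDim F = setDim D - 1 →
      IsFace D F' → setDim F' = setDim D - 1 →
      VisibleFrom D (x (Fin.last n)) F → VisibleFrom D (x (Fin.last n)) F' →
      F ≠ F' →
      addRay F (x (Fin.last n)) ∩ addRay F' (x (Fin.last n)) ⊆
        addRay (F ∩ F') (x (Fin.last n))) := by
  have hsmul : ∀ z ∈ D, ∀ s : ℝ, 0 ≤ s → s • z ∈ D := hD ▸ fun _ hz _ hs => smul_mem_coneFin hz hs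
  have hray : ∀ F, IsFace D F → VisibleFrom D (x (Fin.last n)) F →
      addRay F (x (Fin.last n)) ∩ D = F := fun F hF hvis => hvis.addRay_inter_eq hsmul hF.subset
  exact ⟨hray, fun F F' hF _ hF' _ hvis hvis' _ =>
    addRay_inter_addRay_subset (hray F hF hvis) (hray F' hF' hvis')⟩
end
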